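/- arXiv:2110.09906 — 2 statements merged into one kernel-verified Lean document; each statement's English description precedes it below -/
import Mathlib

section
/- Let n be a positive integer and r an arbitrary integer. Then in ℚ(q), the sum ∑_{k=0}^{n-1} q^{r(n-k)^2+(r-1)k} · [n+k choose k]_q^{2r} · [n-1 choose k]_q^{2r} is congruent to q^{(r-1)n+1}·[n] − (r(2r-1)(n-1)^2/4)·q·(1-q)^2·[n]^3 modulo Φ_n(q)^4. -/
open Finset Polynomial

noncomputable def q : RatFunc ℚ := RatFunc.X
noncomputable def qPoch (m : ℕ) : RatFunc ℚ := ∏ i ∈ Finset.range m, (1 - q ^ (i + 1))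
noncomputable def qbinom (m k : ℕ) : RatFunc ℚ :=
  if k ≤ m then qPoch m / (qPoch k * qPoch (m - k)) else 0
noncomputable def qint (n : ℕ) : Polynomial ℚ := ∑ i ∈ Finset.range n, Polynomial.X ^ i
noncomputable def qintR (n : ℕ) : RatFunc ℚ :=
  algebraMap (Polynomial ℚ) (RatFunc ℚ) (qint n)
def ratModEq (P : Polynomial ℚ) (A B : RatFunc ℚ) : Prop :=
  ∃ a b : Polynomial ℚ, IsCoprime b P ∧ P ∣ a ∧
    A - B = algebraMap (Polynomial ℚ) (RatFunc ℚ) a / algebraMap (Polynomial ℚ) (RatFunc ℚ) b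

/-! ### Infrastructure -/

noncomputable abbrev ι : Polynomial ℚ →+* RatFunc ℚ := algebraMap (Polynomial ℚ) (RatFunc ℚ)

noncomputable def zet (n : ℕ) : ℂ := Complex.exp (2 * Real.pi * Complex.I / n)

lemma iota_inj : Function.Injective ι := RatFunc.algebraMap_injective ℚ

instance : CharZero (RatFunc ℚ) :=
  ⟨fun a b h => Nat.cast_injective (R := Polynomial ℚ)
    (iota_inj (by rw [map_natCast, map_natCast]; exact_mod_cast h))⟩

lemma iota_ne_zero {p : Polynomial ℚ} (h : p ≠ 0) : ι p ≠ 0 := fun hh => h (iota_inj (by simpa using hh))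

section n
variable (n : ℕ)

/-- `Φ`-integral rational functions. -/
def Good (A : RatFunc ℚ) : Prop :=
  ∃ a b : Polynomial ℚ, aeval (zet n) b ≠ 0 ∧ A = ι a / ι b

/-- `Φ`-units. -/
def GoodU (A : RatFunc ℚ) : Prop :=
  ∃ a b : Polynomial ℚ, aeval (zet n) a ≠ 0 ∧ aeval (zet n) b ≠ 0 ∧ A = ι a / ι b

/-- congruence mod `Φ^m`. -/
def MEq (m : ℕ) (A B : RatFunc ℚ) : Prop :=
  ∃ a b : Polynomial ℚ, aeval (zet n) b ≠ 0 ∧ (cyclotomic n ℚ) ^ m ∣ a ∧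
    A - B = ι a / ι b

variable {n}

lemma aeval_ne_zero_ne {b : Polynomial ℚ} (hb : aeval (zet n) b ≠ 0) : b ≠ 0 := by
  rintro rfl; simp at hb

lemma Good.def' {A : RatFunc ℚ} (h : Good n A) :
    ∃ a b : Polynomial ℚ, aeval (zet n) b ≠ 0 ∧ A * ι b = ι a := by
  obtain ⟨a, b, hb, rfl⟩ := h
  exact ⟨a, b, hb, by field_simp [iota_ne_zero (aeval_ne_zero_ne hb)]⟩

lemma GoodU.toGood {A : RatFunc ℚ} (h : GoodU n A) : Good n A := by
  obtain ⟨a, b, _, hb, rfl⟩ := h; exact ⟨a, b, hb, rfl⟩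

lemma Good.add {A B : RatFunc ℚ} (hA : Good n A) (hB : Good n B) : Good n (A + B) := by
  obtain ⟨a, b, hb, rfl⟩ := hA; obtain ⟨c, d, hd, rfl⟩ := hB
  refine ⟨a * d + c * b, b * d, by simp [hb, hd], ?_⟩
  rw [div_add_div _ _ (iota_ne_zero (aeval_ne_zero_ne hb)) (iota_ne_zero (aeval_ne_zero_ne hd))]
  push_cast [map_mul, map_add]
  ring_nf

lemma Good.mul {A B : RatFunc ℚ} (hA : Good n A) (hB : Good n B) : Good n (A * B) := by
  obtain ⟨a, b, hb, rfl⟩ := hA; obtain ⟨c, d, hd, rfl⟩ := hB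
  exact ⟨a * c, b * d, by simp [hb, hd], by rw [div_mul_div_comm, map_mul, map_mul]⟩

lemma Good.neg {A : RatFunc ℚ} (hA : Good n A) : Good n (-A) := by
  obtain ⟨a, b, hb, rfl⟩ := hA; exact ⟨-a, b, hb, by rw [map_neg, neg_div]⟩

lemma Good.ofPoly (p : Polynomial ℚ) : Good n (ι p) := ⟨p, 1, by simp, by simp⟩

lemma Good.zero : Good n 0 := by simpa using Good.ofPoly 0
lemma Good.one : Good n 1 := by simpa using Good.ofPoly 1

lemma Good.sub {A B : RatFunc ℚ} (hA : Good n A) (hB : Good n B) : Good n (A - B) := by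
  simpa [sub_eq_add_neg] using hA.add hB.neg

lemma Good.pow {A : RatFunc ℚ} (hA : Good n A) (k : ℕ) : Good n (A ^ k) := by
  induction k with
  | zero => simpa using Good.one
  | succ k ih => rw [pow_succ]; exact ih.mul hA

lemma Good.sum {s : Finset α} {f : α → RatFunc ℚ} (h : ∀ i ∈ s, Good n (f i)) :
    Good n (∑ i ∈ s, f i) := by
  classical
  induction s using Finset.induction with
  | empty => simpa using Good.zero
  | insert _ _ hx ih =>
    rw [Finset.sum_insert hx]
    exact (h _ (Finset.mem_insert_self _ _)).add (ih fun i hi => h i (Finset.mem_insert_of_mem hi))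

lemma Good.prod {s : Finset α} {f : α → RatFunc ℚ} (h : ∀ i ∈ s, Good n (f i)) :
    Good n (∏ i ∈ s, f i) := by
  classical
  induction s using Finset.induction with
  | empty => simpa using Good.one
  | insert _ _ hx ih =>
    rw [Finset.prod_insert hx]
    exact (h _ (Finset.mem_insert_self _ _)).mul (ih fun i hi => h i (Finset.mem_insert_of_mem hi))

lemma GoodU.mul {A B : RatFunc ℚ} (hA : GoodU n A) (hB : GoodU n B) : GoodU n (A * B) := by
  obtain ⟨a, b, ha, hb, rfl⟩ := hA; obtain ⟨c, d, hc, hd, rfl⟩ := hB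
  exact ⟨a * c, b * d, by simp [ha, hc], by simp [hb, hd],
    by rw [div_mul_div_comm, map_mul, map_mul]⟩

lemma GoodU.inv {A : RatFunc ℚ} (hA : GoodU n A) : GoodU n A⁻¹ := by
  obtain ⟨a, b, ha, hb, rfl⟩ := hA
  exact ⟨b, a, hb, ha, by rw [inv_div]⟩

lemma GoodU.ne_zero {A : RatFunc ℚ} (hA : GoodU n A) : A ≠ 0 := by
  obtain ⟨a, b, ha, hb, rfl⟩ := hA
  exact div_ne_zero (iota_ne_zero (aeval_ne_zero_ne ha)) (iota_ne_zero (aeval_ne_zero_ne hb))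

lemma GoodU.one : GoodU n 1 := ⟨1, 1, by simp, by simp, by simp⟩

lemma GoodU.pow {A : RatFunc ℚ} (hA : GoodU n A) (k : ℕ) : GoodU n (A ^ k) := by
  induction k with
  | zero => simpa using GoodU.one
  | succ k ih => rw [pow_succ]; exact ih.mul hA

lemma GoodU.zpow {A : RatFunc ℚ} (hA : GoodU n A) (m : ℤ) : GoodU n (A ^ m) := by
  cases m with
  | ofNat k => simpa using hA.pow k
  | negSucc k => rw [zpow_negSucc]; exact (hA.pow (k+1)).inv

/-! ### MEq lemmas -/

lemma MEq.of_eq {m : ℕ} {A B : RatFunc ℚ} (h : A = B) : MEq n m A B :=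
  ⟨0, 1, by simp, dvd_zero _, by simp [h]⟩

lemma MEq.refl (m : ℕ) (A : RatFunc ℚ) : MEq n m A A := MEq.of_eq rfl

lemma MEq.symm {m : ℕ} {A B : RatFunc ℚ} (h : MEq n m A B) : MEq n m B A := by
  obtain ⟨a, b, hb, hd, he⟩ := h
  exact ⟨-a, b, hb, (dvd_neg).mpr hd, by rw [map_neg, neg_div, ← he]; ring⟩

lemma MEq.add {m : ℕ} {A B C D : RatFunc ℚ} (h1 : MEq n m A B) (h2 : MEq n m C D) :
    MEq n m (A + C) (B + D) := by
  obtain ⟨a, b, hb, hd, he⟩ := h1; obtain ⟨c, d, hd', hd2, he2⟩ := h2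
  refine ⟨a * d + c * b, b * d, by simp [hb, hd'], dvd_add (hd.mul_right _) (hd2.mul_right _), ?_⟩
  have : A + C - (B + D) = (A - B) + (C - D) := by ring
  rw [this, he, he2,
    div_add_div _ _ (iota_ne_zero (aeval_ne_zero_ne hb)) (iota_ne_zero (aeval_ne_zero_ne hd'))]
  push_cast [map_mul, map_add]
  ring_nf

lemma MEq.trans {m : ℕ} {A B C : RatFunc ℚ} (h1 : MEq n m A B) (h2 : MEq n m B C) :
    MEq n m A C := by
  obtain ⟨a, b, hb, hd, he⟩ := h1; obtain ⟨c, d, hd', hd2, he2⟩ := h2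
  refine ⟨a * d + c * b, b * d, by simp [hb, hd'], dvd_add (hd.mul_right _) (hd2.mul_right _), ?_⟩
  have : A - C = (A - B) + (B - C) := by ring
  rw [this, he, he2,
    div_add_div _ _ (iota_ne_zero (aeval_ne_zero_ne hb)) (iota_ne_zero (aeval_ne_zero_ne hd'))]
  push_cast [map_mul, map_add]
  ring_nf

lemma MEq.neg {m : ℕ} {A B : RatFunc ℚ} (h : MEq n m A B) : MEq n m (-A) (-B) := by
  obtain ⟨a, b, hb, hd, he⟩ := h
  exact ⟨-a, b, hb, (dvd_neg).mpr hd, by rw [map_neg, neg_div, ← he]; ring⟩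

lemma MEq.sub {m : ℕ} {A B C D : RatFunc ℚ} (h1 : MEq n m A B) (h2 : MEq n m C D) :
    MEq n m (A - C) (B - D) := by
  simpa [sub_eq_add_neg] using h1.add h2.neg

lemma MEq.mul_good {m : ℕ} {A B C : RatFunc ℚ} (h : MEq n m A B) (hC : Good n C) :
    MEq n m (A * C) (B * C) := by
  obtain ⟨a, b, hb, hd, he⟩ := h; obtain ⟨c, d, hd', rfl⟩ := hC
  refine ⟨a * c, b * d, by simp [hb, hd'], hd.mul_right _, ?_⟩
  have : A * (ι c / ι d) - B * (ι c / ι d) = (A - B) * (ι c / ι d) := by ring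
  rw [this, he, div_mul_div_comm, map_mul, map_mul]

lemma MEq.good_mul {m : ℕ} {A B C : RatFunc ℚ} (h : MEq n m A B) (hC : Good n C) :
    MEq n m (C * A) (C * B) := by
  simpa [mul_comm] using h.mul_good hC

lemma MEq.mul {m : ℕ} {A B C D : RatFunc ℚ} (h1 : MEq n m A B) (h2 : MEq n m C D)
    (hB : Good n B) (hC : Good n C) : MEq n m (A * C) (B * D) :=
  (h1.mul_good hC).trans (h2.good_mul hB)

/-- key: product of higher congruences to zero. -/
lemma MEq.zero_mul_zero {k l : ℕ} {A B : RatFunc ℚ} (h1 : MEq n k A 0) (h2 : MEq n l B 0) :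
    MEq n (k + l) (A * B) 0 := by
  obtain ⟨a, b, hb, hd, he⟩ := h1; obtain ⟨c, d, hd', hd2, he2⟩ := h2
  rw [sub_zero] at he he2
  refine ⟨a * c, b * d, by simp [hb, hd'], by rw [pow_add]; exact mul_dvd_mul hd hd2, ?_⟩
  rw [sub_zero, he, he2, div_mul_div_comm, map_mul, map_mul]

lemma MEq.mono {m m' : ℕ} {A B : RatFunc ℚ} (hm : m' ≤ m) (h : MEq n m A B) : MEq n m' A B := by
  obtain ⟨a, b, hb, hd, he⟩ := h
  exact ⟨a, b, hb, (pow_dvd_pow _ hm).trans hd, he⟩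

lemma MEq.zero_good {m : ℕ} {A B : RatFunc ℚ} (h : MEq n m A 0) (hB : Good n B) :
    MEq n m (A * B) 0 := by
  simpa using h.mul_good hB

lemma MEq.sum {m : ℕ} {s : Finset α} {f g : α → RatFunc ℚ}
    (h : ∀ i ∈ s, MEq n m (f i) (g i)) : MEq n m (∑ i ∈ s, f i) (∑ i ∈ s, g i) := by
  classical
  induction s using Finset.induction with
  | empty => exact MEq.refl _ _
  | insert _ _ hx ih =>
    rw [Finset.sum_insert hx, Finset.sum_insert hx]
    exact (h _ (Finset.mem_insert_self _ _)).add (ih fun i hi => h i (Finset.mem_insert_of_mem hi))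

lemma MEq.sub_zero {m : ℕ} {A B : RatFunc ℚ} (h : MEq n m (A - B) 0) : MEq n m A B := by
  obtain ⟨a, b, hb, hd, he⟩ := h
  exact ⟨a, b, hb, hd, by rw [← he]; ring⟩

lemma MEq.to_sub_zero {m : ℕ} {A B : RatFunc ℚ} (h : MEq n m A B) : MEq n m (A - B) 0 := by
  obtain ⟨a, b, hb, hd, he⟩ := h
  exact ⟨a, b, hb, hd, by rw [← he]; ring⟩

end n

/-! ### Part 2: atoms -/

section atoms
variable {n : ℕ} (hn : 2 ≤ n)

lemma zet_prim (hn1 : 1 ≤ n) : IsPrimitiveRoot (zet n) n :=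
  Complex.isPrimitiveRoot_exp n (by omega)

lemma cyclo_eq_minpoly (hn1 : 1 ≤ n) : cyclotomic n ℚ = minpoly ℚ (zet n) :=
  Polynomial.cyclotomic_eq_minpoly_rat (zet_prim hn1) (by omega)

/-- The key divisibility criterion. -/
lemma phi_dvd_iff (hn1 : 1 ≤ n) (p : Polynomial ℚ) :
    cyclotomic n ℚ ∣ p ↔ aeval (zet n) p = 0 := by
  rw [cyclo_eq_minpoly hn1]
  constructor
  · rintro ⟨c, rfl⟩
    simp [minpoly.aeval]
  · exact minpoly.dvd ℚ _

lemma zet_pow_n (hn1 : 1 ≤ n) : (zet n) ^ n = 1 := (zet_prim hn1).pow_eq_one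

lemma zet_pow_ne_one (hn1 : 1 ≤ n) {j : ℕ} (h1 : ¬ n ∣ j) : (zet n) ^ j ≠ 1 := by
  intro h
  exact h1 (((zet_prim hn1).pow_eq_one_iff_dvd j).mp h)

lemma zet_ne_zero (hn1 : 1 ≤ n) : zet n ≠ 0 := by
  intro h
  have := zet_pow_n hn1
  rw [h] at this
  simp [zero_pow (by omega : n ≠ 0)] at this

lemma q_eq : q = ι X := (RatFunc.algebraMap_X (K := ℚ)).symm

lemma q_pow_eq (j : ℕ) : q ^ j = ι (X ^ j) := by rw [q_eq, map_pow]

lemma q_ne_zero : q ≠ 0 := by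
  rw [q_eq]; exact iota_ne_zero X_ne_zero

lemma zet_pow_ne_one' (hn1 : 1 ≤ n) {j : ℕ} (h1 : 1 ≤ j) (h2 : j < n) : (zet n) ^ j ≠ 1 :=
  zet_pow_ne_one hn1 (fun hd => by have := Nat.le_of_dvd (by omega) hd; omega)

/-- `q^j` is a unit. -/
lemma goodU_q_pow (hn1 : 1 ≤ n) (j : ℕ) : GoodU n (q ^ j) := by
  refine ⟨X ^ j, 1, ?_, by simp, ?_⟩
  · simp [zet_ne_zero hn1, pow_ne_zero]
  · rw [map_one, div_one, q_pow_eq]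

lemma goodU_q (hn1 : 1 ≤ n) : GoodU n q := by simpa using goodU_q_pow hn1 1

lemma goodU_q_zpow (hn1 : 1 ≤ n) (m : ℤ) : GoodU n (q ^ m) := (goodU_q hn1).zpow m

/-- `1 - q^j` is a unit for `1 ≤ j ≤ n-1`. -/
lemma goodU_one_sub_q_pow (hn1 : 1 ≤ n) {j : ℕ} (h1 : 1 ≤ j) (h2 : j < n) :
    GoodU n (1 - q ^ j) := by
  refine ⟨1 - X ^ j, 1, ?_, by simp, by rw [map_one, div_one, map_sub, map_one, map_pow, ← q_eq]⟩
  simp only [map_sub, map_one, map_pow, aeval_X]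
  intro h
  exact zet_pow_ne_one' hn1 h1 h2 (sub_eq_zero.mp h).symm

lemma one_sub_q_pow_ne_zero {j : ℕ} (h1 : 1 ≤ j) : (1 : RatFunc ℚ) - q ^ j ≠ 0 := by
  rw [q_pow_eq, ← map_one ι, ← map_sub]
  apply iota_ne_zero
  intro h
  have := congrArg (fun p => Polynomial.coeff p j) h
  simp only [Polynomial.coeff_sub, Polynomial.coeff_one, Polynomial.coeff_X_pow,
    Polynomial.coeff_zero, if_pos rfl, if_neg (by omega : ¬ j = 0)] at this
  norm_num at this

/-- `q^j - q^n` is a unit for `1 ≤ j ≤ n-1`. -/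
lemma goodU_q_pow_sub_q_pow (hn1 : 1 ≤ n) {j : ℕ} (h1 : 1 ≤ j) (h2 : j < n) :
    GoodU n (q ^ j - q ^ n) := by
  refine ⟨X ^ j - X ^ n, 1, ?_, by simp, by
    rw [map_one, div_one, map_sub, map_pow, map_pow, ← q_eq]⟩
  simp only [map_sub, map_pow, aeval_X]
  rw [zet_pow_n hn1]
  intro h
  exact zet_pow_ne_one' hn1 h1 h2 (sub_eq_zero.mp h)

/-- the deviation `s := 1 - q^n`. -/
noncomputable def sdev (n : ℕ) : RatFunc ℚ := 1 - q ^ n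

lemma sdev_eq : sdev n = ι (1 - X ^ n) := by
  rw [sdev, map_sub, map_one, map_pow, ← q_eq]

lemma meq_sdev (hn1 : 1 ≤ n) : MEq n 1 (sdev n) 0 := by
  refine ⟨1 - X ^ n, 1, by simp, ?_, by rw [sub_zero, map_one, div_one, sdev_eq]⟩
  rw [pow_one, phi_dvd_iff hn1]
  simp [zet_pow_n hn1]

lemma good_sdev : Good n (sdev n) := by rw [sdev_eq]; exact Good.ofPoly _

lemma qintR_eq_sum : qintR n = ∑ i ∈ Finset.range n, q ^ i := by
  rw [qintR, qint, map_sum]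
  exact Finset.sum_congr rfl fun i _ => by rw [map_pow, ← q_eq]

lemma good_qintR : Good n (qintR n) := Good.ofPoly _

/-- `Φ ∣ [n]` for `n ≥ 2`. -/
lemma meq_qintR (hn : 2 ≤ n) : MEq n 1 (qintR n) 0 := by
  refine ⟨qint n, 1, by simp, ?_, by rw [sub_zero, map_one, div_one]; rfl⟩
  rw [pow_one, phi_dvd_iff (by omega)]
  have h := geom_sum_mul (zet n) n
  rw [zet_pow_n (by omega), sub_self] at h
  have hz : zet n - 1 ≠ 0 := by
    rw [sub_ne_zero]
    simpa using zet_pow_ne_one (n := n) (by omega) (j := 1)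
      (by intro hd; exact absurd (Nat.le_of_dvd (by omega) hd) (by omega))
  have := (mul_eq_zero.mp h).resolve_right hz
  rw [qint, map_sum]
  simpa using this

/-- `s = (1-q)·[n]`. -/
lemma sdev_factor : sdev n = (1 - q) * qintR n := by
  rw [sdev, qintR_eq_sum]
  have h := geom_sum_mul q n
  have : (1 - q) * ∑ i ∈ Finset.range n, q ^ i = -((∑ i ∈ Finset.range n, q ^ i) * (q - 1)) := by
    ring
  rw [this, h]
  ring

/-- constants -/
lemma good_C (c : ℚ) : Good n (RatFunc.C c) := by
  have : RatFunc.C c = ι (Polynomial.C c) := by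
    rw [← RatFunc.algebraMap_C (K := ℚ)]
  rw [this]; exact Good.ofPoly _

lemma good_intCast (m : ℤ) : Good n ((m : RatFunc ℚ)) := by
  rw [← map_intCast ι m]; exact Good.ofPoly _

lemma good_natCast (m : ℕ) : Good n ((m : RatFunc ℚ)) := by
  rw [← map_natCast ι m]; exact Good.ofPoly _

end atoms

/-! ### Part 3: expansion machinery -/

section expand
variable {n : ℕ}

lemma C_eq_cast (c : ℚ) : RatFunc.C c = ((c : RatFunc ℚ)) := eq_ratCast _ c

lemma good_qCast (c : ℚ) : Good n ((c : RatFunc ℚ)) := by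
  rw [← C_eq_cast]; exact good_C c

lemma Good.meq0 {A : RatFunc ℚ} (h : Good n A) : MEq n 0 A 0 := by
  obtain ⟨a, b, hb, rfl⟩ := h
  exact ⟨a, b, hb, by simpa using dvd_refl a, by rw [sub_zero]⟩

lemma meq_sdev_pow (hn1 : 1 ≤ n) (k : ℕ) : MEq n k (sdev n ^ k) 0 := by
  induction k with
  | zero => simpa using Good.one.meq0
  | succ k ih => rw [pow_succ]; exact ih.zero_mul_zero (meq_sdev hn1)

lemma MEq.shift {m : ℕ} {A B : RatFunc ℚ} (hn1 : 1 ≤ n) (k : ℕ) (h : MEq n m A B) :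
    MEq n (k + m) (sdev n ^ k * A) (sdev n ^ k * B) := by
  apply MEq.sub_zero
  have e : sdev n ^ k * A - sdev n ^ k * B = sdev n ^ k * (A - B) := by ring
  rw [e]
  exact (meq_sdev_pow hn1 k).zero_mul_zero h.to_sub_zero

lemma goodU_one_sub_s2 {T : RatFunc ℚ} (hn1 : 1 ≤ n) (hT : Good n T) :
    GoodU n (1 - sdev n ^ 2 * T) := by
  obtain ⟨t1, t2, ht2, rfl⟩ := hT
  have hs : aeval (zet n) (1 - X ^ n : Polynomial ℚ) = 0 := by simp [zet_pow_n hn1]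
  refine ⟨t2 - (1 - X ^ n) ^ 2 * t1, t2, by simp [hs, ht2], ht2, ?_⟩
  rw [sdev_eq]
  field_simp [iota_ne_zero (aeval_ne_zero_ne ht2)]
  simp [map_sub, map_mul, map_pow]

lemma meq_cancel {m : ℕ} {A B C : RatFunc ℚ} (hA : GoodU n A) (h : MEq n m (A * B) C) :
    MEq n m B (A⁻¹ * C) := by
  apply MEq.sub_zero
  have e : B - A⁻¹ * C = (A * B - C) * A⁻¹ := by
    field_simp [hA.ne_zero]
  rw [e]
  exact h.to_sub_zero.zero_good hA.inv.toGood

lemma natPowLin (hn1 : 1 ≤ n) {T W : RatFunc ℚ} (hT : Good n T) (hW : Good n W)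
    (h : MEq n 4 W (1 - sdev n ^ 2 * T)) (k : ℕ) :
    MEq n 4 (W ^ k) (1 - (k : RatFunc ℚ) * (sdev n ^ 2 * T)) := by
  induction k with
  | zero => simpa using MEq.refl 4 (1 : RatFunc ℚ)
  | succ k ih =>
    have hG1 : Good n (1 - (k : RatFunc ℚ) * (sdev n ^ 2 * T)) :=
      Good.one.sub ((good_natCast k).mul ((good_sdev.pow 2).mul hT))
    have step : MEq n 4 (W ^ (k+1)) ((1 - (k : RatFunc ℚ) * (sdev n ^ 2 * T)) *
        (1 - sdev n ^ 2 * T)) := by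
      rw [pow_succ]
      exact ih.mul h hG1 hW
    refine step.trans (MEq.sub_zero ?_)
    have e : (1 - (k : RatFunc ℚ) * (sdev n ^ 2 * T)) * (1 - sdev n ^ 2 * T) -
        (1 - ((k+1 : ℕ) : RatFunc ℚ) * (sdev n ^ 2 * T)) =
        sdev n ^ 4 * ((k : RatFunc ℚ) * T ^ 2) := by push_cast; ring
    rw [e]
    exact (meq_sdev_pow hn1 4).zero_good ((good_natCast k).mul (hT.pow 2))

lemma meq_inv {m : ℕ} {W V : RatFunc ℚ} (hW : GoodU n W) (hV : GoodU n V)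
    (h : MEq n m W V) : MEq n m W⁻¹ V⁻¹ := by
  apply MEq.sub_zero
  have e : W⁻¹ - V⁻¹ = (V - W) * (W⁻¹ * V⁻¹) := by
    field_simp [hW.ne_zero, hV.ne_zero]
  rw [e]
  exact (h.symm.to_sub_zero).zero_good (hW.inv.toGood.mul hV.inv.toGood)

lemma zpowLin (hn1 : 1 ≤ n) {T W : RatFunc ℚ} (hT : Good n T) (hW : GoodU n W)
    (h : MEq n 4 W (1 - sdev n ^ 2 * T)) (m : ℤ) :
    MEq n 4 (W ^ m) (1 - (m : RatFunc ℚ) * (sdev n ^ 2 * T)) := by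
  cases m with
  | ofNat k =>
    rw [Int.ofNat_eq_coe, zpow_natCast]
    have := natPowLin hn1 hT hW.toGood h k
    refine this.trans (MEq.of_eq (by push_cast; ring))
  | negSucc k =>
    rw [zpow_negSucc]
    have h1 : MEq n 4 (W ^ (k+1)) (1 - ((k+1 : ℕ) : RatFunc ℚ) * (sdev n ^ 2 * T)) :=
      natPowLin hn1 hT hW.toGood h (k+1)
    have hG2 : GoodU n (1 - ((k+1 : ℕ) : RatFunc ℚ) * (sdev n ^ 2 * T)) := by
      have : ((k+1:ℕ) : RatFunc ℚ) * (sdev n ^ 2 * T) = sdev n ^ 2 * (((k+1:ℕ) : RatFunc ℚ) * T) := by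
        ring
      rw [this]
      exact goodU_one_sub_s2 hn1 ((good_natCast _).mul hT)
    have h2 := meq_inv (hW.pow (k+1)) hG2 h1
    refine h2.trans ?_
    -- (1 - a)⁻¹ ≡ 1 + a  mod Φ^4, where a = (k+1) s² T
    have hprod : MEq n 4 ((1 - ((k+1:ℕ) : RatFunc ℚ) * (sdev n ^ 2 * T)) *
        (1 + ((k+1:ℕ) : RatFunc ℚ) * (sdev n ^ 2 * T))) 1 := by
      apply MEq.sub_zero
      have e : (1 - ((k+1:ℕ) : RatFunc ℚ) * (sdev n ^ 2 * T)) *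
          (1 + ((k+1:ℕ) : RatFunc ℚ) * (sdev n ^ 2 * T)) - 1 =
          sdev n ^ 4 * (-(((k+1:ℕ) : RatFunc ℚ) ^ 2 * T ^ 2)) := by push_cast; ring
      rw [e]
      exact (meq_sdev_pow hn1 4).zero_good (((good_natCast _).pow 2).mul (hT.pow 2)).neg
    have h3 := meq_cancel hG2 hprod
    have h4 := h3.symm
    rw [mul_one] at h4
    exact h4.trans (MEq.of_eq (by rw [Int.cast_negSucc]; push_cast; ring))

end expand

/-! ### Part 3b: expansions of (q^n)^m -/

section expand2
variable {n : ℕ}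

lemma goodU_one_add_s_mul (hn1 : 1 ≤ n) {T : RatFunc ℚ} (hT : Good n T) :
    GoodU n (1 + sdev n * T) := by
  obtain ⟨t1, t2, ht2, rfl⟩ := hT
  have hs : aeval (zet n) (1 - X ^ n : Polynomial ℚ) = 0 := by simp [zet_pow_n hn1]
  refine ⟨t2 + (1 - X ^ n) * t1, t2, by simp [hs, ht2], ht2, ?_⟩
  rw [sdev_eq]
  field_simp [iota_ne_zero (aeval_ne_zero_ne ht2)]
  simp [map_add, map_mul]

lemma meq_inv_approx {m : ℕ} {W P Q : RatFunc ℚ} (hW : GoodU n W) (hP : GoodU n P)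
    (h : MEq n m W P) (hPQ : MEq n m (P * Q) 1) : MEq n m W⁻¹ Q := by
  have h4 := (meq_cancel hP hPQ).symm
  rw [mul_one] at h4
  exact (meq_inv hW hP h).trans h4.symm.symm

lemma qn_eq : (q ^ n : RatFunc ℚ) = 1 - sdev n := by rw [sdev]; ring

lemma good_qn : Good n (q ^ n : RatFunc ℚ) := by rw [q_pow_eq]; exact Good.ofPoly _

/-- second-order expansion coefficients -/
noncomputable def e2coef (m : ℤ) : RatFunc ℚ := 1 - ((m : ℚ) : RatFunc ℚ) * sdev n

noncomputable def e3coef (n : ℕ) (m : ℤ) : RatFunc ℚ :=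
  1 - ((m : ℚ) : RatFunc ℚ) * sdev n + (((m * (m-1) / 2 : ℚ)) : RatFunc ℚ) * sdev n ^ 2

lemma good_e3coef (m : ℤ) : Good n (e3coef n m) := by
  unfold e3coef
  exact (Good.one.sub ((good_qCast _).mul good_sdev)).add
    ((good_qCast _).mul (good_sdev.pow 2))

lemma goodU_e3coef (hn1 : 1 ≤ n) (m : ℤ) : GoodU n (e3coef n m) := by
  have e : e3coef n m = 1 + sdev n * (-((m : ℚ) : RatFunc ℚ) +
      (((m * (m-1) / 2 : ℚ)) : RatFunc ℚ) * sdev n) := by unfold e3coef; ring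
  rw [e]
  exact goodU_one_add_s_mul hn1 (((good_qCast _).neg).add ((good_qCast _).mul good_sdev))

lemma natE3 (hn1 : 1 ≤ n) (k : ℕ) : MEq n 3 ((q ^ n : RatFunc ℚ) ^ k) (e3coef n k) := by
  induction k with
  | zero => apply MEq.of_eq; unfold e3coef; push_cast; ring
  | succ k ih =>
    have step : MEq n 3 ((q ^ n : RatFunc ℚ) ^ (k+1)) (e3coef n k * (q ^ n)) := by
      rw [pow_succ]
      exact ih.mul_good (n := n) good_qn
    refine (step.trans (MEq.of_eq (by rw [qn_eq]))).trans (MEq.sub_zero ?_)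
    rw [show ((k+1:ℕ):ℤ) = (k:ℤ)+1 by push_cast; ring]
    have e : e3coef n k * (1 - sdev n) - e3coef n ((k:ℤ)+1) =
        sdev n ^ 3 * ((-(k * (k-1) / 2) : ℚ) : RatFunc ℚ) := by
      unfold e3coef; push_cast; ring
    rw [e]
    exact (meq_sdev_pow hn1 3).zero_good (good_qCast _)

lemma E3 (hn1 : 1 ≤ n) (m : ℤ) : MEq n 3 ((q ^ n : RatFunc ℚ) ^ m) (e3coef n m) := by
  cases m with
  | ofNat k =>
    rw [Int.ofNat_eq_coe, zpow_natCast]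
    exact (natE3 hn1 k).trans (MEq.of_eq (by unfold e3coef; push_cast; ring))
  | negSucc k =>
    rw [zpow_negSucc]
    refine meq_inv_approx ((goodU_q_pow hn1 n).pow (k+1)) (goodU_e3coef hn1 (k+1))
      (by exact_mod_cast natE3 hn1 (k+1)) (MEq.sub_zero ?_)
    have e : e3coef n (k+1) * e3coef n (Int.negSucc k) - 1 =
        sdev n ^ 3 * (((-((k+1:ℚ)^2) : ℚ)) : RatFunc ℚ)
          + sdev n ^ 4 * ((((k+1:ℚ) * ((k+1:ℚ)-1) / 2 * ((k+1:ℚ) * ((k+1:ℚ)+1) / 2) : ℚ)) : RatFunc ℚ) := by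
      unfold e3coef
      rw [Int.cast_negSucc]
      push_cast
      ring
    rw [e]
    exact (((meq_sdev_pow hn1 3).zero_good (good_qCast _)).add
      (((meq_sdev_pow hn1 4).mono (by omega)).zero_good (good_qCast _))).trans
      (MEq.of_eq (by ring))

lemma goodU_e2coef (hn1 : 1 ≤ n) (m : ℤ) : GoodU n (e2coef (n := n) m) := by
  have e : e2coef (n := n) m = 1 + sdev n * (-((m : ℚ) : RatFunc ℚ)) := by unfold e2coef; ring
  rw [e]
  exact goodU_one_add_s_mul hn1 (good_qCast _).neg

lemma E2 (hn1 : 1 ≤ n) (m : ℤ) : MEq n 2 ((q ^ n : RatFunc ℚ) ^ m) (e2coef (n := n) m) := by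
  have h := (E3 hn1 m).mono (by omega : 2 ≤ 3)
  refine h.trans (MEq.sub_zero ?_)
  have e : e3coef n m - e2coef (n := n) m = sdev n ^ 2 * (((m * (m-1) / 2 : ℚ)) : RatFunc ℚ) := by
    unfold e3coef e2coef; ring
  rw [e]
  exact (meq_sdev_pow hn1 2).zero_good (good_qCast _)

end expand2

/-! ### Part 4: the q-binomial product formula -/

section binom
variable {n : ℕ}

lemma qPoch_ne_zero (m : ℕ) : qPoch m ≠ 0 := by
  rw [qPoch]
  exact Finset.prod_ne_zero_iff.mpr fun i _ => one_sub_q_pow_ne_zero (by omega)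

lemma qbinom_eq1 (n k : ℕ) : qbinom (n + k) k = qPoch (n + k) / (qPoch k * qPoch n) := by
  rw [qbinom, if_pos (by omega), Nat.add_sub_cancel]

lemma qbinom_eq2 (hn : 2 ≤ n) {k : ℕ} (hk : k ≤ n - 1) :
    qbinom (n - 1) k = qPoch (n - 1) / (qPoch k * qPoch (n - 1 - k)) := by
  rw [qbinom, if_pos hk]

lemma poch_split1 (n k : ℕ) :
    qPoch (n + k) = qPoch n * ∏ j ∈ Finset.range k, (1 - q ^ (n + j + 1)) := by
  rw [qPoch, qPoch, Finset.prod_range_add]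

lemma qPoch_add (a k : ℕ) :
    qPoch (a + k) = qPoch a * ∏ j ∈ Finset.range k, (1 - q ^ (a + j + 1)) := by
  rw [qPoch, qPoch, Finset.prod_range_add]

lemma poch_split2 (hn : 2 ≤ n) {k : ℕ} (hk : k ≤ n - 1) :
    qPoch (n - 1) = qPoch (n - 1 - k) * ∏ j ∈ Finset.range k, (1 - q ^ (n - 1 - j)) := by
  calc qPoch (n - 1) = qPoch ((n - 1 - k) + k) := by rw [show (n-1-k)+k = n-1 by omega]
    _ = qPoch (n - 1 - k) * ∏ j ∈ Finset.range k, (1 - q ^ ((n - 1 - k) + j + 1)) :=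
        qPoch_add _ _
    _ = qPoch (n - 1 - k) * ∏ j ∈ Finset.range k, (1 - q ^ (n - 1 - j)) := by
        congr 1
        have e : ∀ j ∈ Finset.range k, (1 : RatFunc ℚ) - q ^ ((n - 1 - k) + j + 1) =
            (fun j => (1 : RatFunc ℚ) - q ^ (n - 1 - j)) (k - 1 - j) := by
          intro j hj
          rw [Finset.mem_range] at hj
          simp only
          congr 2
          omega
        rw [Finset.prod_congr rfl e]
        exact Finset.prod_range_reflect (fun j => (1 : RatFunc ℚ) - q ^ (n - 1 - j)) k

lemma prodForm (hn : 2 ≤ n) {k : ℕ} (hk : k ≤ n - 1) :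
    qbinom (n + k) k * qbinom (n - 1) k =
      ∏ j ∈ Finset.range k,
        ((1 - q ^ (n + j + 1)) * (1 - q ^ (n - 1 - j)) / (1 - q ^ (j + 1)) ^ 2) := by
  rw [qbinom_eq1, qbinom_eq2 hn hk, poch_split1, poch_split2 hn hk,
    Finset.prod_div_distrib, Finset.prod_mul_distrib, Finset.prod_pow]
  simp only [qPoch]
  have h1 : (∏ i ∈ Finset.range k, ((1:RatFunc ℚ) - q ^ (i+1))) ≠ 0 :=
    Finset.prod_ne_zero_iff.mpr fun i _ => one_sub_q_pow_ne_zero (by omega)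
  have h2 : (∏ i ∈ Finset.range n, ((1:RatFunc ℚ) - q ^ (i+1))) ≠ 0 :=
    Finset.prod_ne_zero_iff.mpr fun i _ => one_sub_q_pow_ne_zero (by omega)
  have h3 : (∏ i ∈ Finset.range (n-1-k), ((1:RatFunc ℚ) - q ^ (i+1))) ≠ 0 :=
    Finset.prod_ne_zero_iff.mpr fun i _ => one_sub_q_pow_ne_zero (by omega)
  field_simp

/-- the basic building blocks -/
noncomputable def cc (n j : ℕ) : RatFunc ℚ := q ^ (j+1) / (q ^ n * (1 - q ^ (j+1)) ^ 2)

lemma goodU_cc (hn1 : 1 ≤ n) {j : ℕ} (hj : j + 1 < n) : GoodU n (cc n j) := by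
  rw [cc, div_eq_mul_inv]
  exact (goodU_q_pow hn1 (j+1)).mul
    (((goodU_q_pow hn1 n).mul ((goodU_one_sub_q_pow hn1 (by omega) hj).pow 2)).inv)

lemma good_cc (hn1 : 1 ≤ n) {j : ℕ} (hj : j + 1 < n) : Good n (cc n j) :=
  (goodU_cc hn1 hj).toGood

lemma factor_j (hn : 2 ≤ n) {j : ℕ} (hj : j + 1 ≤ n - 1) :
    (1 - q ^ (n + j + 1)) * (1 - q ^ (n - 1 - j)) / (1 - q ^ (j + 1)) ^ 2 =
      -(q ^ (n - 1 - j)) * (1 - sdev n ^ 2 * cc n j) := by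
  obtain ⟨i, hi⟩ : ∃ i, n = i + (j + 1) := ⟨n - (j+1), by omega⟩
  have h1 : n + j + 1 = i + 2 * (j + 1) := by omega
  have h2 : n - 1 - j = i := by omega
  rw [h1, h2, cc, sdev, hi]
  have hq := q_ne_zero
  have hij : (1:RatFunc ℚ) - q ^ (j+1) ≠ 0 := one_sub_q_pow_ne_zero (by omega)
  field_simp
  ring

lemma prodForm2 (hn : 2 ≤ n) {k : ℕ} (hk : k ≤ n - 1) :
    qbinom (n + k) k * qbinom (n - 1) k =
      (-1 : RatFunc ℚ) ^ k * q ^ (∑ j ∈ Finset.range k, (n - 1 - j)) *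
        ∏ j ∈ Finset.range k, (1 - sdev n ^ 2 * cc n j) := by
  rw [prodForm hn hk]
  have : ∀ j ∈ Finset.range k,
      (1 - q ^ (n + j + 1)) * (1 - q ^ (n - 1 - j)) / (1 - q ^ (j + 1)) ^ 2 =
        ((-1 : RatFunc ℚ) * q ^ (n - 1 - j)) * (1 - sdev n ^ 2 * cc n j) := by
    intro j hj
    rw [Finset.mem_range] at hj
    rw [factor_j hn (by omega)]
    ring
  rw [Finset.prod_congr rfl this, Finset.prod_mul_distrib, Finset.prod_mul_distrib,
    Finset.prod_const, Finset.prod_pow_eq_pow_sum]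
  simp [Finset.card_range]

end binom

/-! ### Part 4b: per-term congruence -/

section term
variable {n : ℕ}

lemma prodMEq (hn1 : 1 ≤ n) {t : Finset ℕ} {f c : ℕ → RatFunc ℚ}
    (hf : ∀ j ∈ t, MEq n 4 (f j) (1 - sdev n ^ 2 * c j))
    (hgf : ∀ j ∈ t, Good n (f j)) (hgc : ∀ j ∈ t, Good n (c j)) :
    MEq n 4 (∏ j ∈ t, f j) (1 - sdev n ^ 2 * ∑ j ∈ t, c j) := by
  classical
  induction t using Finset.induction with
  | empty => exact MEq.of_eq (by simp)
  | @insert a t ha ih =>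
    rw [Finset.prod_insert ha, Finset.sum_insert ha]
    have h1 : MEq n 4 (f a * ∏ j ∈ t, f j)
        ((1 - sdev n ^ 2 * c a) * (1 - sdev n ^ 2 * ∑ j ∈ t, c j)) :=
      (hf a (Finset.mem_insert_self _ _)).mul
        (ih (fun j hj => hf j (Finset.mem_insert_of_mem hj))
            (fun j hj => hgf j (Finset.mem_insert_of_mem hj))
            (fun j hj => hgc j (Finset.mem_insert_of_mem hj)))
        (Good.one.sub ((good_sdev.pow 2).mul (hgc a (Finset.mem_insert_self _ _))))
        (Good.prod (fun j hj => hgf j (Finset.mem_insert_of_mem hj)))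
    refine h1.trans (MEq.sub_zero ?_)
    have e : (1 - sdev n ^ 2 * c a) * (1 - sdev n ^ 2 * ∑ j ∈ t, c j) -
        (1 - sdev n ^ 2 * (c a + ∑ j ∈ t, c j)) =
        sdev n ^ 4 * (c a * ∑ j ∈ t, c j) := by ring
    rw [e]
    exact (meq_sdev_pow hn1 4).zero_good
      ((hgc a (Finset.mem_insert_self _ _)).mul
        (Good.sum fun j hj => hgc j (Finset.mem_insert_of_mem hj)))

lemma termCong (hn : 2 ≤ n) (r : ℤ) {k : ℕ} (hk : k ≤ n - 1) :
    MEq n 4 (q ^ (r * ((n : ℤ) - (k : ℤ)) ^ 2 + (r - 1) * (k : ℤ)) *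
        qbinom (n + k) k ^ (2 * r) * qbinom (n - 1) k ^ (2 * r))
      (q ^ (r * (n : ℤ) ^ 2 - (k : ℤ)) *
        (1 - sdev n ^ 2 * (((2 * r : ℤ) : RatFunc ℚ) * ∑ j ∈ Finset.range k, cc n j))) := by
  have hn1 : 1 ≤ n := by omega
  -- the exponent bookkeeping
  have hE : ∀ k, k ≤ n - 1 → 2 * ((∑ j ∈ Finset.range k, (n - 1 - j) : ℕ) : ℤ) =
      2 * k * n - k * k - k := by
    intro k
    induction k with
    | zero => intro _; simp
    | succ k ih =>
      intro hk
      rw [Finset.sum_range_succ]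
      have h2 := ih (by omega)
      have h3 : ((n - 1 - k : ℕ) : ℤ) = (n : ℤ) - 1 - (k : ℤ) := by omega
      push_cast
      push_cast at h2 h3
      linarith [h2, h3]
  have hexp : (r * ((n : ℤ) - (k : ℤ)) ^ 2 + (r - 1) * (k : ℤ)) +
      ((∑ j ∈ Finset.range k, (n - 1 - j) : ℕ) : ℤ) * (2 * r) = r * (n : ℤ) ^ 2 - (k : ℤ) := by
    linear_combination r * hE k hk
  have hsign : ((-1 : RatFunc ℚ) ^ k) ^ (2 * r) = 1 := by
    rw [zpow_mul]
    have h2 : ((-1 : RatFunc ℚ) ^ k) ^ (2 : ℤ) = 1 := by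
      rw [show (2 : ℤ) = ((2 : ℕ) : ℤ) from rfl, zpow_natCast, ← pow_mul, mul_comm, pow_mul]
      norm_num
    rw [h2, one_zpow]
  -- equality massage
  have heq : q ^ (r * ((n : ℤ) - (k : ℤ)) ^ 2 + (r - 1) * (k : ℤ)) *
      qbinom (n + k) k ^ (2 * r) * qbinom (n - 1) k ^ (2 * r) =
      q ^ (r * (n : ℤ) ^ 2 - (k : ℤ)) *
        ∏ j ∈ Finset.range k, (1 - sdev n ^ 2 * cc n j) ^ (2 * r) := by
    rw [mul_assoc, ← mul_zpow, prodForm2 hn hk, mul_zpow, mul_zpow, hsign, one_mul,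
      ← zpow_natCast q (∑ j ∈ Finset.range k, (n - 1 - j)), ← zpow_mul,
      ← mul_assoc, ← zpow_add₀ q_ne_zero, hexp, Finset.prod_zpow]
  rw [heq]
  -- the congruence part
  have main : MEq n 4 (∏ j ∈ Finset.range k, (1 - sdev n ^ 2 * cc n j) ^ (2 * r))
      (1 - sdev n ^ 2 * ∑ j ∈ Finset.range k, (((2 * r : ℤ) : RatFunc ℚ) * cc n j)) := by
    apply prodMEq hn1
    · intro j hj
      rw [Finset.mem_range] at hj
      have hj' : j + 1 < n := by omega
      have h := zpowLin hn1 (good_cc hn1 hj') (goodU_one_sub_s2 hn1 (good_cc hn1 hj'))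
        (MEq.refl 4 _) (2 * r)
      exact h.trans (MEq.of_eq (by push_cast; ring))
    · intro j hj
      rw [Finset.mem_range] at hj
      exact ((goodU_one_sub_s2 hn1 (good_cc hn1 (by omega))).zpow _).toGood
    · intro j hj
      rw [Finset.mem_range] at hj
      exact (good_intCast _).mul (good_cc hn1 (by omega))
  have main2 := main.good_mul ((goodU_q_zpow hn1 (r * (n : ℤ) ^ 2 - (k : ℤ))).toGood)
  refine main2.trans (MEq.of_eq ?_)
  rw [← Finset.mul_sum]

end term

/-! ### Part 5: sum reorganization -/

section sums
variable {n : ℕ}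

noncomputable def Sc (n k : ℕ) : RatFunc ℚ := ∑ j ∈ Finset.range k, cc n j
noncomputable def S1 (n : ℕ) : RatFunc ℚ := ∑ j ∈ Finset.range (n-1), (1 - q^(j+1))⁻¹
noncomputable def S2 (n : ℕ) : RatFunc ℚ := ∑ j ∈ Finset.range (n-1), ((1 - q^(j+1))⁻¹)^2
noncomputable def S2q (n : ℕ) : RatFunc ℚ :=
  ∑ j ∈ Finset.range (n-1), q^(j+1) * ((1 - q^(j+1))⁻¹)^2

lemma q_ne_one : (q : RatFunc ℚ) ≠ 1 := by
  rw [q_eq, ← map_one ι]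
  intro h
  have := iota_inj h
  have h2 := congrArg (fun p => Polynomial.coeff p 1) this
  simp [Polynomial.coeff_one] at h2

lemma qpow_split (r : ℤ) {k : ℕ} (hk : k < n) :
    q ^ (r * (n:ℤ)^2 - (k:ℤ)) = q ^ (r * (n:ℤ)^2 - (n:ℤ) + 1) * q ^ ((n-1-k : ℕ)) := by
  rw [← zpow_natCast q (n-1-k), ← zpow_add₀ q_ne_zero]
  congr 1
  omega

lemma A1eq (hn : 2 ≤ n) (r : ℤ) :
    ∑ k ∈ Finset.range n, q ^ (r * (n:ℤ)^2 - (k:ℤ)) =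
      q ^ (r * (n:ℤ)^2 - (n:ℤ) + 1) * qintR n := by
  have hre : (∑ k ∈ Finset.range n, q ^ ((n-1-k : ℕ))) = ∑ k ∈ Finset.range n, q ^ k :=
    Finset.sum_range_reflect (fun k => q ^ k) n
  rw [Finset.sum_congr rfl (fun k hk => qpow_split r (Finset.mem_range.mp hk)),
    ← Finset.mul_sum, hre, qintR_eq_sum]

lemma geo (hn : 2 ≤ n) {m : ℕ} (hm1 : 1 ≤ m) (hmn : m ≤ n) :
    ∑ k ∈ Finset.Ico m n, q ^ ((n-1-k : ℕ)) = (q ^ ((n-m : ℕ)) - 1) / (q - 1) := by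
  rw [Finset.sum_Ico_eq_sum_range]
  have e : ∀ i ∈ Finset.range (n-m), q ^ ((n-1-(m+i) : ℕ)) = (fun i => q ^ i) ((n-m) - 1 - i) := by
    intro i hi
    rw [Finset.mem_range] at hi
    simp only
    congr 1
    omega
  rw [Finset.sum_congr rfl e, Finset.sum_range_reflect (fun i => q ^ i) (n-m)]
  exact geom_sum_eq q_ne_one (n-m)

lemma ccStep (hn : 2 ≤ n) {j : ℕ} (hj : j + 1 ≤ n - 1) :
    cc n j * (q ^ ((n-(j+1) : ℕ)) - 1) =
      (q ^ n)⁻¹ * ((1 - q^(j+1))⁻¹ - sdev n * ((1 - q^(j+1))⁻¹)^2) := by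
  obtain ⟨i, hi⟩ : ∃ i, n = i + (j+1) := ⟨n-(j+1), by omega⟩
  have h2 : n - (j+1) = i := by omega
  rw [cc, sdev, h2, hi]
  have h3 := one_sub_q_pow_ne_zero (j := j+1) (by omega)
  have h4 := q_ne_zero
  field_simp
  ring

lemma A2eq (hn : 2 ≤ n) (r : ℤ) :
    ∑ k ∈ Finset.range n, q ^ (r * (n:ℤ)^2 - (k:ℤ)) * Sc n k =
      q ^ (r * (n:ℤ)^2 - (n:ℤ) + 1) *
        ((q - 1)⁻¹ * ((q ^ n)⁻¹ * (S1 n - sdev n * S2 n))) := by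
  have step1 : ∑ k ∈ Finset.range n, q ^ (r * (n:ℤ)^2 - (k:ℤ)) * Sc n k =
      ∑ k ∈ Finset.range n, ∑ j ∈ Finset.range k, q ^ (r * (n:ℤ)^2 - (k:ℤ)) * cc n j := by
    apply Finset.sum_congr rfl
    intro k _
    rw [Sc, Finset.mul_sum]
  have step2 := Finset.sum_Ico_Ico_comm' 0 n (fun j k => q ^ (r * (n:ℤ)^2 - (k:ℤ)) * cc n j)
  simp only [Nat.Ico_zero_eq_range] at step2
  -- drop the empty j = n-1 term
  set F : ℕ → RatFunc ℚ := fun j => ∑ k ∈ Finset.Ico (j+1) n, q ^ (r * (n:ℤ)^2 - (k:ℤ)) * cc n j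
    with hF
  have step3 : ∑ j ∈ Finset.range n, F j = ∑ j ∈ Finset.range (n-1), F j := by
    have h := Finset.sum_range_succ F (n-1)
    rw [show n-1+1 = n from by omega] at h
    have hz : F (n-1) = 0 := by
      rw [hF]
      simp only
      rw [show n-1+1 = n from by omega, Finset.Ico_self, Finset.sum_empty]
    rw [h, hz, add_zero]
  -- evaluate the inner geometric sums
  have step4 : ∀ j ∈ Finset.range (n-1), F j =
      q ^ (r * (n:ℤ)^2 - (n:ℤ) + 1) * ((q - 1)⁻¹ *
        ((q ^ n)⁻¹ * ((1 - q^(j+1))⁻¹ - sdev n * ((1 - q^(j+1))⁻¹)^2))) := by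
    intro j hj
    rw [Finset.mem_range] at hj
    rw [hF]
    simp only
    rw [← Finset.sum_mul]
    have e1 : ∑ k ∈ Finset.Ico (j+1) n, q ^ (r * (n:ℤ)^2 - (k:ℤ)) =
        q ^ (r * (n:ℤ)^2 - (n:ℤ) + 1) * ((q ^ ((n-(j+1) : ℕ)) - 1) / (q - 1)) := by
      rw [Finset.sum_congr rfl (fun k hk => qpow_split r (Finset.mem_Ico.mp hk).2),
        ← Finset.mul_sum, geo hn (by omega) (by omega)]
    rw [e1, div_eq_mul_inv]
    have e2 := ccStep hn (by omega : j + 1 ≤ n - 1)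
    calc q ^ (r * (n:ℤ)^2 - (n:ℤ) + 1) * ((q ^ ((n-(j+1) : ℕ)) - 1) * (q - 1)⁻¹) * cc n j
        = q ^ (r * (n:ℤ)^2 - (n:ℤ) + 1) * ((q - 1)⁻¹ *
            (cc n j * (q ^ ((n-(j+1) : ℕ)) - 1))) := by ring
      _ = _ := by rw [e2]
  rw [step1, ← step2, step3, Finset.sum_congr rfl step4, ← Finset.mul_sum, ← Finset.mul_sum,
    ← Finset.mul_sum]
  congr 3
  rw [S1, S2, Finset.mul_sum, ← Finset.sum_sub_distrib]

end sums

/-! ### Part 6a: pairing identity for S1 -/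

section pairing
variable {n : ℕ}

lemma GoodU.neg {A : RatFunc ℚ} (h : GoodU n A) : GoodU n (-A) := by
  obtain ⟨a, b, ha, hb, rfl⟩ := h
  exact ⟨-a, b, by simp [ha], hb, by rw [map_neg, neg_div]⟩

noncomputable def gg (n j : ℕ) : RatFunc ℚ :=
  q^(j+1) * (((1 - q^(j+1))⁻¹)^2 * (q^(j+1) - q^n)⁻¹)

noncomputable def GG (n : ℕ) : RatFunc ℚ := ∑ j ∈ Finset.range (n-1), gg n j

lemma good_gg (hn : 2 ≤ n) {j : ℕ} (hj : j + 1 ≤ n - 1) : Good n (gg n j) := by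
  have hn1 : 1 ≤ n := by omega
  exact ((goodU_q_pow hn1 (j+1)).mul
    ((((goodU_one_sub_q_pow hn1 (by omega) (by omega)).inv).pow 2).mul
      ((goodU_q_pow_sub_q_pow hn1 (by omega) (by omega)).inv))).toGood

lemma good_GG (hn : 2 ≤ n) : Good n (GG n) :=
  Good.sum fun j hj => good_gg hn (by have := Finset.mem_range.mp hj; omega)

lemma pairId (hn : 2 ≤ n) {j : ℕ} (hj : j + 1 ≤ n - 1) :
    (1 - q^(j+1))⁻¹ + (1 - q^((n-1-j : ℕ)))⁻¹ =
      1 - sdev n * (q^(j+1) * ((1 - q^(j+1))⁻¹)^2) + sdev n^2 * gg n j := by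
  obtain ⟨i, hi⟩ : ∃ i, n = i + (j+1) := ⟨n-(j+1), by omega⟩
  have h2 : n - 1 - j = i := by omega
  rw [gg, sdev, h2, hi]
  have h3 := one_sub_q_pow_ne_zero (j := j+1) (by omega)
  have h4 := one_sub_q_pow_ne_zero (j := i) (by omega)
  have h5 : q^(j+1) - q^(i+(j+1)) ≠ 0 := by
    have := (goodU_q_pow_sub_q_pow (n := n) (by omega) (j := j+1) (by omega)
      (by omega)).ne_zero
    rwa [hi] at this
  field_simp
  ring

lemma S1pair (hn : 2 ≤ n) :
    2 * S1 n = ((n:RatFunc ℚ) - 1) - sdev n * S2q n + sdev n^2 * GG n := by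
  have hrefl : S1 n = ∑ j ∈ Finset.range (n-1), (1 - q^((n-1-j : ℕ)))⁻¹ := by
    rw [S1]
    have e : ∀ j ∈ Finset.range (n-1), ((1:RatFunc ℚ) - q^((n-1-j : ℕ)))⁻¹ =
        (fun j => ((1:RatFunc ℚ) - q^(j+1))⁻¹) ((n-1) - 1 - j) := by
      intro j hj
      rw [Finset.mem_range] at hj
      simp only
      congr 3
      omega
    rw [Finset.sum_congr rfl e, Finset.sum_range_reflect (fun j => ((1:RatFunc ℚ) - q^(j+1))⁻¹)]
  have key : 2 * S1 n = ∑ j ∈ Finset.range (n-1),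
      ((1 - q^(j+1))⁻¹ + (1 - q^((n-1-j : ℕ)))⁻¹) := by
    rw [Finset.sum_add_distrib, ← S1, ← hrefl]
    ring
  rw [key, Finset.sum_congr rfl
    (fun j hj => pairId hn (by have := Finset.mem_range.mp hj; omega))]
  rw [Finset.sum_add_distrib, Finset.sum_sub_distrib, Finset.sum_const, Finset.card_range,
    ← Finset.mul_sum, ← Finset.mul_sum, ← S2q, ← GG]
  have : ((n - 1 : ℕ) : RatFunc ℚ) = (n : RatFunc ℚ) - 1 := by
    have : (1:ℕ) ≤ n := by omega
    push_cast [Nat.cast_sub this]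
    ring
  simp [nsmul_eq_mul, this]

end pairing

/-! ### Part 6b: the M_J machinery mod Φ -/

section emm
variable {n : ℕ}

noncomputable def MM (n J : ℕ) : RatFunc ℚ :=
  ∑ i ∈ Finset.range n, (i : RatFunc ℚ) * q^(i*J)

lemma good_MM (J : ℕ) : Good n (MM n J) :=
  Good.sum fun i _ => (good_natCast i).mul (by rw [q_pow_eq]; exact Good.ofPoly _)

lemma xId (x : RatFunc ℚ) (m : ℕ) :
    (∑ i ∈ Finset.range m, (i : RatFunc ℚ) * x^i) * (x - 1) =
      ((m : RatFunc ℚ) - 1) * x^m - (∑ i ∈ Finset.range m, x^i) + 1 := by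
  induction m with
  | zero => simp
  | succ m ih =>
    rw [Finset.sum_range_succ, Finset.sum_range_succ (f := fun i => x^i)]
    push_cast
    linear_combination ih

lemma meq_qpow_mul (hn1 : 1 ≤ n) (t : ℕ) : MEq n 1 (q^(n*t)) 1 := by
  refine ⟨(X^n)^t - 1, 1, by simp, ?_, ?_⟩
  · rw [pow_one]
    have h := sub_dvd_pow_sub_pow (X^n : Polynomial ℚ) 1 t
    rw [one_pow] at h
    exact dvd_trans ((phi_dvd_iff hn1 _).mpr (by simp [zet_pow_n hn1])) h
  · rw [map_one, div_one, map_sub, map_one, map_pow, map_pow, ← q_eq, ← pow_mul]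

lemma charSum (hn : 2 ≤ n) (m : ℕ) :
    MEq n 1 (∑ i ∈ Finset.range n, q^(m*i)) (if n ∣ m then ((n : RatFunc ℚ)) else 0) := by
  have hn1 : 1 ≤ n := by omega
  by_cases hd : n ∣ m
  · rw [if_pos hd]
    obtain ⟨t, rfl⟩ := hd
    have h1 : ∀ i ∈ Finset.range n, MEq n 1 (q^(n*t*i)) 1 := by
      intro i _
      rw [show n*t*i = n*(t*i) from by ring]
      exact meq_qpow_mul hn1 (t*i)
    refine (MEq.sum h1).trans (MEq.of_eq ?_)
    simp
  · rw [if_neg hd]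
    refine ⟨∑ i ∈ Finset.range n, (X^m)^i, 1, by simp, ?_, ?_⟩
    · rw [pow_one, phi_dvd_iff hn1]
      have h := geom_sum_mul ((zet n)^m) n
      have hy : ((zet n)^m)^n = 1 := by
        rw [← pow_mul, mul_comm, pow_mul, zet_pow_n hn1, one_pow]
      rw [hy, sub_self] at h
      have hz : (zet n)^m - 1 ≠ 0 := sub_ne_zero.mpr (zet_pow_ne_one hn1 hd)
      have := (mul_eq_zero.mp h).resolve_right hz
      simpa using this
    · rw [map_one, div_one, sub_zero, map_sum]
      apply Finset.sum_congr rfl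
      intro i _
      rw [map_pow, map_pow, ← q_eq, ← pow_mul]

/-- `(1-q^J)⁻¹ ≡ -(1/n)·M_J (mod Φ)` for `1 ≤ J ≤ n-1`. -/
lemma inv_cong (hn : 2 ≤ n) {J : ℕ} (hJ1 : 1 ≤ J) (hJ : J ≤ n - 1) :
    MEq n 1 ((1 - q^J)⁻¹) (((-1/(n:ℚ) : ℚ)) * MM n J) := by
  have hn1 : 1 ≤ n := by omega
  have hnd : ¬ n ∣ J := fun hd => by have := Nat.le_of_dvd (by omega) hd; omega
  -- M_J * (q^J - 1) ≡ n
  have key : MEq n 1 (MM n J * (q^J - 1)) ((n : RatFunc ℚ)) := by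
    rw [MM]
    have e := xId (q^J) n
    have e2 : ∀ i ∈ Finset.range n, ((i:RatFunc ℚ)) * (q^J)^i = (i:RatFunc ℚ) * q^(i*J) := by
      intro i _
      rw [← pow_mul, mul_comm J i]
    rw [Finset.sum_congr rfl e2] at e
    rw [e]
    have h1 : MEq n 1 (((n : RatFunc ℚ) - 1) * (q^J)^n) (((n : RatFunc ℚ) - 1) * 1) := by
      refine MEq.good_mul ?_ ((good_natCast n).sub Good.one)
      rw [← pow_mul, mul_comm J n]
      exact meq_qpow_mul hn1 J
    have h2 : MEq n 1 (∑ i ∈ Finset.range n, (q^J)^i) 0 := by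
      have := charSum hn J
      rw [if_neg hnd] at this
      have e3 : ∀ i ∈ Finset.range n, q^(J*i) = (q^J)^i := by
        intro i _
        rw [← pow_mul]
      rwa [Finset.sum_congr rfl e3] at this
    have := (h1.sub h2).add (MEq.refl 1 (1 : RatFunc ℚ))
    exact this.trans (MEq.of_eq (by ring))
  -- cancel the unit (q^J - 1)
  have hU : GoodU n ((q^J : RatFunc ℚ) - 1) := by
    have := (goodU_one_sub_q_pow hn1 hJ1 (by omega)).neg
    simpa [neg_sub] using this
  have hkey2 : MEq n 1 ((q^J - 1) * MM n J) ((n : RatFunc ℚ)) := by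
    rwa [mul_comm] at key
  have h3 := meq_cancel hU hkey2
  -- M_J ≡ (q^J-1)⁻¹ * n ; now multiply by -(1/n)
  have h4 := h3.mul_good (good_qCast (-1/(n:ℚ)))
  have hq : (1 - q^J) ≠ 0 := one_sub_q_pow_ne_zero hJ1
  have hqn : ((n:ℚ)) ≠ 0 := by positivity
  refine (MEq.of_eq ?_).trans (h4.symm.trans (MEq.of_eq ?_))
  · -- (1-q^J)⁻¹ = ((q^J-1)⁻¹ * n) * (-1/n)
    have hn0 : ((n : RatFunc ℚ)) ≠ 0 := by
      exact_mod_cast Nat.cast_ne_zero.mpr (by omega : n ≠ 0)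
    have hq' : (q^J : RatFunc ℚ) - 1 ≠ 0 := hU.ne_zero
    field_simp
    push_cast
    ring_nf
    simp only [mul_inv_cancel_right₀ hn0, mul_inv_cancel₀ hn0]
    ring
  · ring
end emm

/-! ### Part 6c: evaluation of the quadratic sums mod Φ -/

section dsum
variable {n : ℕ}

lemma gsum1 (m : ℕ) : ∑ i ∈ Finset.range m, (i : RatFunc ℚ) =
    (m : RatFunc ℚ) * ((m : RatFunc ℚ) - 1) / 2 := by
  induction m with
  | zero => simp
  | succ m ih => rw [Finset.sum_range_succ, ih]; push_cast; ring

lemma gsum2 (m : ℕ) : ∑ i ∈ Finset.range m, (i : RatFunc ℚ)^2 =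
    (m : RatFunc ℚ) * ((m : RatFunc ℚ) - 1) * (2*(m : RatFunc ℚ) - 1) / 6 := by
  induction m with
  | zero => simp
  | succ m ih => rw [Finset.sum_range_succ, ih]; push_cast; ring

noncomputable def Vsum (n ε : ℕ) : RatFunc ℚ :=
  ∑ i ∈ Finset.range n, ∑ i' ∈ Finset.range n,
    ((i : RatFunc ℚ) * (i' : RatFunc ℚ)) *
      ((if n ∣ i+i'+ε then ((n : RatFunc ℚ)) else 0) - 1)

lemma innerT (hn : 2 ≤ n) {ε : ℕ} (hε : ε ≤ 1) {i : ℕ} (hi : i < n) :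
    ∑ i' ∈ Finset.range n, ((i : RatFunc ℚ) * (i' : RatFunc ℚ)) *
        (if n ∣ i+i'+ε then ((n : RatFunc ℚ)) else 0) =
      (i : RatFunc ℚ) * ((n-i-ε : ℕ) : RatFunc ℚ) * (n : RatFunc ℚ) := by
  by_cases hz : i = 0 ∧ ε = 0
  · obtain ⟨rfl, rfl⟩ := hz
    simp
  · have hiε : 1 ≤ i + ε := by omega
    rw [Finset.sum_eq_single_of_mem (n-i-ε) (Finset.mem_range.mpr (by omega))]
    · rw [if_pos (by rw [show i+(n-i-ε)+ε = n from by omega]), mul_assoc]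
    · intro b hb hbne
      rw [Finset.mem_range] at hb
      rw [if_neg, mul_zero]
      rintro ⟨t, ht⟩
      rcases t with _ | _ | t
      · omega
      · omega
      · have h2 : 2 * n ≤ i + b + ε := by rw [ht]; nlinarith
        omega

lemma VsumEval (hn : 2 ≤ n) {ε : ℕ} (hε : ε ≤ 1) :
    Vsum n ε = (n : RatFunc ℚ) *
        (((n : RatFunc ℚ) - (ε : RatFunc ℚ)) * ((n : RatFunc ℚ) * ((n : RatFunc ℚ) - 1) / 2) -
          (n : RatFunc ℚ) * ((n : RatFunc ℚ) - 1) * (2*(n : RatFunc ℚ) - 1) / 6) -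
      ((n : RatFunc ℚ) * ((n : RatFunc ℚ) - 1) / 2)^2 := by
  rw [Vsum]
  have e1 : ∀ i ∈ Finset.range n, ∑ i' ∈ Finset.range n,
      ((i : RatFunc ℚ) * (i' : RatFunc ℚ)) *
        ((if n ∣ i+i'+ε then ((n : RatFunc ℚ)) else 0) - 1) =
      (i : RatFunc ℚ) * ((n-i-ε : ℕ) : RatFunc ℚ) * (n : RatFunc ℚ) -
        (i : RatFunc ℚ) * ∑ i' ∈ Finset.range n, (i' : RatFunc ℚ) := by
    intro i hi
    rw [Finset.mem_range] at hi
    have : ∀ i' ∈ Finset.range n, ((i : RatFunc ℚ) * (i' : RatFunc ℚ)) *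
        ((if n ∣ i+i'+ε then ((n : RatFunc ℚ)) else 0) - 1) =
        ((i : RatFunc ℚ) * (i' : RatFunc ℚ)) *
          (if n ∣ i+i'+ε then ((n : RatFunc ℚ)) else 0) - (i : RatFunc ℚ) * (i' : RatFunc ℚ) := by
      intro i' _
      ring
    rw [Finset.sum_congr rfl this, Finset.sum_sub_distrib, innerT hn hε hi, ← Finset.mul_sum]
  rw [Finset.sum_congr rfl e1, Finset.sum_sub_distrib]
  have e2 : ∀ i ∈ Finset.range n, (i : RatFunc ℚ) * ((n-i-ε : ℕ) : RatFunc ℚ) * (n : RatFunc ℚ) =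
      (n : RatFunc ℚ) * ((i : RatFunc ℚ) * (((n : RatFunc ℚ) - (ε : RatFunc ℚ)) - (i : RatFunc ℚ))) := by
    intro i hi
    rw [Finset.mem_range] at hi
    have hcast : ((n-i-ε : ℕ) : RatFunc ℚ) = (n : RatFunc ℚ) - (i : RatFunc ℚ) - (ε : RatFunc ℚ) := by
      rw [Nat.cast_sub (by omega : ε ≤ n - i), Nat.cast_sub (by omega : i ≤ n)]
    rw [hcast]
    ring
  rw [Finset.sum_congr rfl e2, ← Finset.mul_sum]
  have e3 : ∀ i ∈ Finset.range n, (i : RatFunc ℚ) * (((n : RatFunc ℚ) - (ε : RatFunc ℚ)) - (i : RatFunc ℚ)) =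
      ((n : RatFunc ℚ) - (ε : RatFunc ℚ)) * (i : RatFunc ℚ) - (i : RatFunc ℚ)^2 := by
    intro i _
    ring
  rw [Finset.sum_congr rfl e3, Finset.sum_sub_distrib, ← Finset.mul_sum, gsum1, gsum2,
    ← Finset.sum_mul, gsum1]
  ring

end dsum

section dsum2
variable {n : ℕ}

lemma doubleEval (hn : 2 ≤ n) {ε : ℕ} (hε : ε ≤ 1) :
    MEq n 1 (∑ j ∈ Finset.range (n-1), q^(ε*(j+1)) * MM n (j+1)^2) (Vsum n ε) := by
  have exactEq : ∑ j ∈ Finset.range (n-1), q^(ε*(j+1)) * MM n (j+1)^2 =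
      ∑ i ∈ Finset.range n, ∑ i' ∈ Finset.range n, ((i:RatFunc ℚ)*(i':RatFunc ℚ)) *
        (∑ j ∈ Finset.range (n-1), q^((i+i'+ε)*(j+1))) := by
    have e1 : ∀ j ∈ Finset.range (n-1), q^(ε*(j+1)) * MM n (j+1)^2 =
        ∑ i ∈ Finset.range n, ∑ i' ∈ Finset.range n,
          ((i:RatFunc ℚ)*(i':RatFunc ℚ)) * q^((i+i'+ε)*(j+1)) := by
      intro j _
      rw [MM, sq, Finset.sum_mul_sum, Finset.mul_sum]
      apply Finset.sum_congr rfl; intro i _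
      rw [Finset.mul_sum]
      apply Finset.sum_congr rfl; intro i' _
      rw [show (i+i'+ε)*(j+1) = ε*(j+1) + (i*(j+1) + i'*(j+1)) from by ring, pow_add, pow_add]
      ring
    rw [Finset.sum_congr rfl e1, Finset.sum_comm]
    apply Finset.sum_congr rfl; intro i _
    rw [Finset.sum_comm]
    apply Finset.sum_congr rfl; intro i' _
    rw [← Finset.mul_sum]
  rw [exactEq, Vsum]
  apply MEq.sum; intro i _
  apply MEq.sum; intro i' _
  have hs := Finset.sum_range_succ' (fun i0 => q^((i+i'+ε)*i0)) (n-1)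
  rw [show n-1+1 = n from by omega] at hs
  simp only [mul_zero, pow_zero] at hs
  have h2 : (∑ j ∈ Finset.range (n-1), q^((i+i'+ε)*(j+1))) =
      (∑ i0 ∈ Finset.range n, q^((i+i'+ε)*i0)) - 1 := by
    rw [hs]; ring
  rw [h2]
  exact ((charSum hn _).sub (MEq.refl 1 1)).good_mul ((good_natCast i).mul (good_natCast i'))

lemma S2cong (hn : 2 ≤ n) : MEq n 1 (S2 n)
    (((((n:ℚ)^2 - 1)/6 - ((n:ℚ)-1)^2/4 : ℚ)) : RatFunc ℚ) := by
  have hn1 : 1 ≤ n := by omega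
  have hn0 : ((n : RatFunc ℚ)) ≠ 0 := Nat.cast_ne_zero.mpr (by omega)
  set c : RatFunc ℚ := ((-1/(n:ℚ) : ℚ) : RatFunc ℚ) with hc
  have step1 : MEq n 1 (S2 n) (∑ j ∈ Finset.range (n-1), (c * MM n (j+1))^2) := by
    rw [S2]
    apply MEq.sum; intro j hj
    have hj' := Finset.mem_range.mp hj
    have h := inv_cong hn (J := j+1) (by omega) (by omega)
    have hsq := h.mul h ((good_qCast _).mul (good_MM _))
      ((goodU_one_sub_q_pow hn1 (by omega) (by omega)).inv.toGood)
    exact (MEq.of_eq (sq _)).trans (hsq.trans (MEq.of_eq (sq _).symm))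
  have step2 : (∑ j ∈ Finset.range (n-1), (c * MM n (j+1))^2) =
      c^2 * ∑ j ∈ Finset.range (n-1), q^(0*(j+1)) * MM n (j+1)^2 := by
    rw [Finset.mul_sum]
    apply Finset.sum_congr rfl; intro j _
    rw [zero_mul, pow_zero, one_mul]
    ring
  have step3 : MEq n 1 (c^2 * ∑ j ∈ Finset.range (n-1), q^(0*(j+1)) * MM n (j+1)^2)
      (c^2 * Vsum n 0) :=
    (doubleEval hn (by omega : (0:ℕ) ≤ 1)).good_mul ((good_qCast _).pow 2)
  refine step1.trans ((MEq.of_eq step2).trans (step3.trans (MEq.of_eq ?_)))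
  rw [VsumEval hn (by omega : (0:ℕ) ≤ 1), hc]
  push_cast
  field_simp
  ring

lemma S2qcong (hn : 2 ≤ n) : MEq n 1 (S2q n)
    ((((((n:ℚ)-1)*((n:ℚ)-2)/6 - ((n:ℚ)-1)^2/4 : ℚ))) : RatFunc ℚ) := by
  have hn1 : 1 ≤ n := by omega
  have hn0 : ((n : RatFunc ℚ)) ≠ 0 := Nat.cast_ne_zero.mpr (by omega)
  set c : RatFunc ℚ := ((-1/(n:ℚ) : ℚ) : RatFunc ℚ) with hc
  have step1 : MEq n 1 (S2q n) (∑ j ∈ Finset.range (n-1), q^(j+1) * (c * MM n (j+1))^2) := by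
    rw [S2q]
    apply MEq.sum; intro j hj
    have hj' := Finset.mem_range.mp hj
    have h := inv_cong hn (J := j+1) (by omega) (by omega)
    have hsq := h.mul h ((good_qCast _).mul (good_MM _))
      ((goodU_one_sub_q_pow hn1 (by omega) (by omega)).inv.toGood)
    have hsq2 := hsq.good_mul ((goodU_q_pow hn1 (j+1)).toGood)
    refine (MEq.of_eq ?_).trans (hsq2.trans (MEq.of_eq ?_))
    · rw [sq]
    · rw [sq]
  have step2 : (∑ j ∈ Finset.range (n-1), q^(j+1) * (c * MM n (j+1))^2) =
      c^2 * ∑ j ∈ Finset.range (n-1), q^(1*(j+1)) * MM n (j+1)^2 := by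
    rw [Finset.mul_sum]
    apply Finset.sum_congr rfl; intro j _
    rw [one_mul]
    ring
  have step3 : MEq n 1 (c^2 * ∑ j ∈ Finset.range (n-1), q^(1*(j+1)) * MM n (j+1)^2)
      (c^2 * Vsum n 1) :=
    (doubleEval hn (by omega : (1:ℕ) ≤ 1)).good_mul ((good_qCast _).pow 2)
  refine step1.trans ((MEq.of_eq step2).trans (step3.trans (MEq.of_eq ?_)))
  rw [VsumEval hn (by omega : (1:ℕ) ≤ 1), hc]
  push_cast
  field_simp
  ring

end dsum2

/-! ### Part 7: final assembly -/

section final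
variable {n : ℕ}

noncomputable def sigq (n : ℕ) : ℚ := ((n:ℚ)-1)*((n:ℚ)-2)/6 - ((n:ℚ)-1)^2/4
noncomputable def sig2 (n : ℕ) : ℚ := ((n:ℚ)^2-1)/6 - ((n:ℚ)-1)^2/4
noncomputable def A0Q (n : ℕ) : ℚ := ((n:ℚ)-1)/2
noncomputable def bQ (n : ℕ) : ℚ := sigq n/2 + sig2 n
noncomputable def A1Q (n : ℕ) (r : ℤ) : ℚ := (1 - ((r:ℚ)*(n:ℚ)-1))*A0Q n - bQ n

lemma good_e2coef (m : ℤ) : Good n (e2coef (n := n) m) :=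
  Good.one.sub ((good_qCast _).mul good_sdev)

lemma good_S1 (hn : 2 ≤ n) : Good n (S1 n) :=
  Good.sum fun j hj => (goodU_one_sub_q_pow (by omega) (by omega)
    (by have := Finset.mem_range.mp hj; omega)).inv.toGood

lemma good_S2 (hn : 2 ≤ n) : Good n (S2 n) :=
  Good.sum fun j hj => (((goodU_one_sub_q_pow (by omega) (by omega)
    (by have := Finset.mem_range.mp hj; omega)).inv).pow 2).toGood

lemma good_S2q (hn : 2 ≤ n) : Good n (S2q n) :=
  Good.sum fun j hj => ((goodU_q_pow (by omega) (j+1)).mul (((goodU_one_sub_q_pow (by omega)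
    (by omega) (by have := Finset.mem_range.mp hj; omega)).inv).pow 2)).toGood

lemma mainCong (hn : 2 ≤ n) (r : ℤ) :
    MEq n 4
      (∑ k ∈ Finset.range n, q ^ (r * ((n : ℤ) - (k : ℤ)) ^ 2 + (r - 1) * (k : ℤ)) *
          qbinom (n + k) k ^ (2 * r) * qbinom (n - 1) k ^ (2 * r))
      (q ^ ((r - 1) * (n : ℤ) + 1) * qintR n -
        RatFunc.C (((r * (2 * r - 1) * ((n : ℤ) - 1) ^ 2 : ℤ) : ℚ) / 4) *
          q * (1 - q) ^ 2 * qintR n ^ 3) := by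
  have hn1 : 1 ≤ n := by omega
  have hq1 : (q : RatFunc ℚ) - 1 ≠ 0 := sub_ne_zero.mpr q_ne_one
  set t : ℤ := r * (n : ℤ) - 1 with ht
  -- termwise congruence
  have h1 : MEq n 4
      (∑ k ∈ Finset.range n, q ^ (r * ((n : ℤ) - (k : ℤ)) ^ 2 + (r - 1) * (k : ℤ)) *
          qbinom (n + k) k ^ (2 * r) * qbinom (n - 1) k ^ (2 * r))
      (∑ k ∈ Finset.range n, q ^ (r * (n:ℤ)^2 - (k:ℤ)) *
        (1 - sdev n ^ 2 * (((2 * r : ℤ) : RatFunc ℚ) * ∑ j ∈ Finset.range k, cc n j))) :=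
    MEq.sum fun k hk => termCong hn r (by have := Finset.mem_range.mp hk; omega)
  -- split into the two pieces and evaluate the sums exactly
  have heq : (∑ k ∈ Finset.range n, q ^ (r * (n:ℤ)^2 - (k:ℤ)) *
        (1 - sdev n ^ 2 * (((2 * r : ℤ) : RatFunc ℚ) * ∑ j ∈ Finset.range k, cc n j))) =
      ((q * qintR n) * (((q^n : RatFunc ℚ))^t - ((q^n : RatFunc ℚ))^(r-1)))
        + (q * qintR n) * ((q^n : RatFunc ℚ))^(r-1)
        - (((2 * r : ℤ) : RatFunc ℚ) * q * (q-1)⁻¹) *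
            (sdev n ^ 2 * (((q^n : RatFunc ℚ))^t * ((q^n : RatFunc ℚ))⁻¹ *
              (S1 n - sdev n * S2 n))) := by
    have e_split : ∀ k ∈ Finset.range n, q ^ (r * (n:ℤ)^2 - (k:ℤ)) *
        (1 - sdev n ^ 2 * (((2 * r : ℤ) : RatFunc ℚ) * ∑ j ∈ Finset.range k, cc n j)) =
        q ^ (r * (n:ℤ)^2 - (k:ℤ)) -
          (((2 * r : ℤ) : RatFunc ℚ) * sdev n ^ 2) * (q ^ (r * (n:ℤ)^2 - (k:ℤ)) * Sc n k) := by
      intro k _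
      rw [Sc]
      ring
    rw [Finset.sum_congr rfl e_split, Finset.sum_sub_distrib, ← Finset.mul_sum,
      A1eq hn r, A2eq hn r]
    have hsplit : q ^ (r * (n:ℤ)^2 - (n:ℤ) + 1) = ((q^n : RatFunc ℚ))^t * q := by
      rw [show r * (n:ℤ)^2 - (n:ℤ) + 1 = (n:ℤ)*t + 1 from by rw [ht]; ring,
        zpow_add₀ q_ne_zero, zpow_mul, zpow_natCast, zpow_one]
    rw [hsplit]
    field_simp
    ring
  -- the main-term congruence (X1)
  have hqu : MEq n 1 (q * qintR n) 0 := by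
    have := (meq_qintR hn).good_mul (goodU_q hn1).toGood
    exact this.trans (MEq.of_eq (mul_zero q))
  have hX1 : MEq n 4 ((q * qintR n) * (((q^n : RatFunc ℚ))^t - ((q^n : RatFunc ℚ))^(r-1)))
      ((q * qintR n) * (e3coef n t - e3coef n (r-1))) := by
    apply MEq.sub_zero
    have e : (q * qintR n) * (((q^n : RatFunc ℚ))^t - ((q^n : RatFunc ℚ))^(r-1)) -
        (q * qintR n) * (e3coef n t - e3coef n (r-1)) =
        ((((q^n : RatFunc ℚ))^t - ((q^n : RatFunc ℚ))^(r-1)) -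
          (e3coef n t - e3coef n (r-1))) * (q * qintR n) := by ring
    rw [e]
    have hh := ((E3 hn1 t).sub (E3 hn1 (r-1))).to_sub_zero.zero_mul_zero hqu
    exact MEq.mono (by norm_num) hh
  -- the correction-term congruence (X2), at level 2 then boosted
  have hYb : MEq n 2 (((q^n : RatFunc ℚ))⁻¹) (e2coef (n := n) (-1)) := by
    have := E2 hn1 (-1)
    rwa [zpow_neg_one] at this
  have hs2q : MEq n 2 (sdev n * S2q n) (sdev n * ((sigq n : ℚ) : RatFunc ℚ)) := by
    have := (MEq.shift hn1 1 (S2qcong hn))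
    rwa [pow_one] at this
  have hs2 : MEq n 2 (sdev n * S2 n) (sdev n * ((sig2 n : ℚ) : RatFunc ℚ)) := by
    have := (MEq.shift hn1 1 (S2cong hn))
    rwa [pow_one] at this
  have hS1' : MEq n 2 (S1 n)
      (((1/2 : ℚ) : RatFunc ℚ) * (((n : RatFunc ℚ) - 1) - sdev n * ((sigq n : ℚ) : RatFunc ℚ))) := by
    have base : MEq n 2 (2 * S1 n)
        ((((n : RatFunc ℚ) - 1) - sdev n * S2q n) + sdev n^2 * GG n) := MEq.of_eq (S1pair hn)
    have hg : MEq n 2 (sdev n^2 * GG n) 0 := (meq_sdev_pow hn1 2).zero_good (good_GG hn)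
    have c1 : MEq n 2 ((((n : RatFunc ℚ) - 1) - sdev n * S2q n) + sdev n^2 * GG n)
        ((((n : RatFunc ℚ) - 1) - sdev n * ((sigq n : ℚ) : RatFunc ℚ)) + 0) :=
      ((MEq.refl 2 _).sub hs2q).add hg
    have hp := (base.trans (c1.trans (MEq.of_eq (add_zero _)))).good_mul (good_qCast (1/2))
    refine (MEq.of_eq ?_).trans hp
    push_cast
    ring
  have hB3 : MEq n 2 (S1 n - sdev n * S2 n)
      (((1/2 : ℚ) : RatFunc ℚ) * (((n : RatFunc ℚ) - 1) - sdev n * ((sigq n : ℚ) : RatFunc ℚ)) -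
        sdev n * ((sig2 n : ℚ) : RatFunc ℚ)) := hS1'.sub hs2
  have hY : MEq n 2 (((q^n : RatFunc ℚ))^t * ((q^n : RatFunc ℚ))⁻¹ * (S1 n - sdev n * S2 n))
      (e2coef (n := n) t * e2coef (n := n) (-1) *
        (((1/2 : ℚ) : RatFunc ℚ) * (((n : RatFunc ℚ) - 1) - sdev n * ((sigq n : ℚ) : RatFunc ℚ)) -
          sdev n * ((sig2 n : ℚ) : RatFunc ℚ))) := by
    refine MEq.mul (MEq.mul (E2 hn1 t) hYb (good_e2coef t)
      ((goodU_q_pow hn1 n).inv.toGood)) hB3 ((good_e2coef t).mul (good_e2coef (-1)))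
      ((good_S1 hn).sub (good_sdev.mul (good_S2 hn)))
  have hYc : MEq n 2
      (e2coef (n := n) t * e2coef (n := n) (-1) *
        (((1/2 : ℚ) : RatFunc ℚ) * (((n : RatFunc ℚ) - 1) - sdev n * ((sigq n : ℚ) : RatFunc ℚ)) -
          sdev n * ((sig2 n : ℚ) : RatFunc ℚ)))
      (((A0Q n : ℚ) : RatFunc ℚ) + ((A1Q n r : ℚ) : RatFunc ℚ) * sdev n) := by
    apply MEq.sub_zero
    have e : (e2coef (n := n) t * e2coef (n := n) (-1) *
        (((1/2 : ℚ) : RatFunc ℚ) * (((n : RatFunc ℚ) - 1) - sdev n * ((sigq n : ℚ) : RatFunc ℚ)) -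
          sdev n * ((sig2 n : ℚ) : RatFunc ℚ))) -
        (((A0Q n : ℚ) : RatFunc ℚ) + ((A1Q n r : ℚ) : RatFunc ℚ) * sdev n) =
        sdev n ^ 2 * ((((- (t:ℚ) * A0Q n - (bQ n) * (1 - (t:ℚ)) : ℚ)) : RatFunc ℚ) +
          (((t:ℚ) * bQ n : ℚ) : RatFunc ℚ) * sdev n) := by
      unfold e2coef A1Q A0Q bQ
      rw [ht]
      push_cast
      ring
    rw [e]
    exact (meq_sdev_pow hn1 2).zero_good
      ((good_qCast _).add ((good_qCast _).mul good_sdev))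
  have hY2 := hY.trans hYc
  have hX2 := (MEq.shift hn1 2 hY2).good_mul
    ((good_intCast (2*r)).mul ((goodU_q hn1).toGood.mul
      (((goodU_one_sub_q_pow hn1 (le_refl 1) (by omega)).neg).inv.toGood)))
  -- hX2 : MEq 4 (C * (s^2 * Y)) (C * (s^2 * (A0 + A1 s))) with C = (2r) * (q * (-(1-q))⁻¹)
  -- assemble everything
  have hfin := (hX1.add (MEq.refl 4 ((q * qintR n) * ((q^n : RatFunc ℚ))^(r-1)))).sub hX2
  refine h1.trans ((MEq.of_eq heq).trans (((MEq.of_eq ?_).trans hfin).trans (MEq.of_eq ?_)))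
  · -- match the X2 grouping: (2r)*q*(q-1)⁻¹ * (...) = (2r)*(q*(-(1-q))⁻¹) * (s^2 * ...)
    rw [show -((1:RatFunc ℚ) - q^1) = q - 1 from by ring]
    ring
  · -- final explicit computation
    have hsplit2 : q ^ ((r-1) * (n:ℤ) + 1) = ((q^n : RatFunc ℚ))^(r-1) * q := by
      rw [show (r-1) * (n:ℤ) + 1 = (n:ℤ)*(r-1) + 1 from by ring,
        zpow_add₀ q_ne_zero, zpow_mul, zpow_natCast, zpow_one]
    rw [hsplit2, C_eq_cast]
    rw [show -((1:RatFunc ℚ) - q^1) = q - 1 from by ring]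
    unfold e3coef A1Q A0Q bQ sigq sig2
    rw [ht, sdev_factor]
    push_cast
    field_simp
    ring

end final

/-! ### Conversion to `ratModEq` and the main theorem -/

lemma meq_to_ratModEq {n : ℕ} (hn1 : 1 ≤ n) {A B : RatFunc ℚ} (h : MEq n 4 A B) :
    ratModEq ((Polynomial.cyclotomic n ℚ) ^ 4) A B := by
  obtain ⟨a, b, hb, hd, he⟩ := h
  refine ⟨a, b, ?_, hd, he⟩
  have hirr : Irreducible (cyclotomic n ℚ) := cyclotomic.irreducible_rat (by omega)
  have hnd : ¬ (cyclotomic n ℚ) ∣ b := fun hdd => hb ((phi_dvd_iff hn1 b).mp hdd)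
  exact (((hirr.coprime_iff_not_dvd).mpr hnd).symm).pow_right

/-- Equation (2.11) of the paper: for a positive integer `n` and an arbitrary integer `r`,
`∑_{k=0}^{n-1} q^{r(n-k)²+(r-1)k} [n+k choose k]^{2r} [n-1 choose k]^{2r}
  ≡ q^{(r-1)n+1}[n] - (r(2r-1)(n-1)²/4) q (1-q)² [n]³  (mod Φ_n(q)⁴)`. -/
theorem sum_even_powers_mod_cyclotomic_pow_four (n : ℕ) (hn : 0 < n) (r : ℤ) :
    ratModEq ((Polynomial.cyclotomic n ℚ) ^ 4)
      (∑ k ∈ Finset.range n,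
        q ^ (r * ((n : ℤ) - (k : ℤ)) ^ 2 + (r - 1) * (k : ℤ)) *
          qbinom (n + k) k ^ (2 * r) * qbinom (n - 1) k ^ (2 * r))
      (q ^ ((r - 1) * (n : ℤ) + 1) * qintR n -
        RatFunc.C (((r * (2 * r - 1) * ((n : ℤ) - 1) ^ 2 : ℤ) : ℚ) / 4) *
          q * (1 - q) ^ 2 * qintR n ^ 3) := by
  rcases Nat.lt_or_ge n 2 with h2 | h2
  · -- n = 1 : both sides are q^r
    have hn1 : n = 1 := by omega
    subst hn1
    refine ⟨0, 1, isCoprime_one_left, dvd_zero _, ?_⟩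
    rw [map_zero, map_one, zero_div]
    have hb1 : qbinom 1 0 = 1 := by
      rw [qbinom, if_pos (by omega)]
      have : qPoch 0 = 1 := by simp [qPoch]
      rw [show (1:ℕ) - 0 = 1 from rfl, this, one_mul, div_self (qPoch_ne_zero 1)]
    have hb0 : qbinom 0 0 = 1 := by
      rw [qbinom, if_pos (by omega)]
      have : qPoch 0 = 1 := by simp [qPoch]
      rw [this]
      norm_num
    have hq1 : qintR 1 = 1 := by
      rw [qintR, qint]
      simp
    rw [Finset.sum_range_one, hb1, hb0, hq1]
    push_cast
    simp only [one_zpow, mul_one]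
    rw [show r + (r-1) * 0 = r from by ring, show r - 1 + 1 = r from by ring]
    norm_num
  · exact meq_to_ratModEq (by omega) (mainCong h2 r)
end

section
/- Let n be a positive integer. Then in ℚ(q), ∑_{j=1}^{n-1} 1/(1 - q^j)^2 ≡ −(n-1)(n-5)/12 (mod Φ_n(q)). -/
open Finset Polynomial

variable {K : Type*} [Field K]

lemma aux_sum_id (n : ℕ) : (∑ k ∈ range n, (k:K)) * 2 = n * (n - 1) := by
  induction n with
  | zero => simp
  | succ m ih =>
    rw [Finset.sum_range_succ]; push_cast; push_cast at ih; linear_combination ih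

lemma aux_sum_sq (n : ℕ) : (∑ k ∈ range n, (k:K)^2) * 6 = n * (n - 1) * (2*n - 1) := by
  induction n with
  | zero => simp
  | succ m ih =>
    rw [Finset.sum_range_succ]; push_cast; push_cast at ih; linear_combination ih

lemma aux_telescope (w : K) (m : ℕ) :
    (1 - w) * ∑ k ∈ range m, (k:K) * w ^ k
      = (∑ k ∈ range m, w ^ k) - 1 - ((m:K) - 1) * w ^ m := by
  induction m with
  | zero => simp
  | succ p ih =>
    rw [Finset.sum_range_succ, Finset.sum_range_succ]
    push_cast
    linear_combination ih

lemma aux_orth {n : ℕ} {ζ : K} (hζ : IsPrimitiveRoot ζ n) (m : ℕ) :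
    ∑ j ∈ range n, (ζ ^ m) ^ j = if n ∣ m then (n:K) else 0 := by
  by_cases h : n ∣ m
  · rw [if_pos h]
    obtain ⟨c, rfl⟩ := h
    simp [pow_mul, hζ.pow_eq_one]
  · rw [if_neg h, geom_sum_eq (fun h1 => h ((hζ.pow_eq_one_iff_dvd m).1 h1))]
    rw [← pow_mul, mul_comm, pow_mul, hζ.pow_eq_one, one_pow, sub_self, zero_div]

lemma aux_pow_comm {ζ : K} (j k l : ℕ) : (ζ^j)^k * (ζ^j)^l = (ζ^(k+l))^j := by
  rw [← pow_mul, ← pow_mul, ← pow_add, ← pow_mul]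
  congr 1
  ring

lemma field_identity {K : Type*} [Field K] [CharZero K] {n : ℕ} (hn : 0 < n)
    {ζ : K} (hζ : IsPrimitiveRoot ζ n) :
    ∑ j ∈ Icc 1 (n-1), ((1 - ζ ^ j)⁻¹)^2 = -(((n:K) - 1) * ((n:K) - 5)) / 12 := by
  set G : ℕ → K := fun j => ∑ k ∈ range n, (k:K) * (ζ ^ j) ^ k with hG
  set S : K := ∑ j ∈ Icc 1 (n-1), ((1 - ζ ^ j)⁻¹)^2 with hS
  set A : K := ∑ k ∈ range n, (k:K) with hA
  set B : K := ∑ k ∈ range n, (k:K)^2 with hB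
  have hn0 : (n:K) ≠ 0 := Nat.cast_ne_zero.2 hn.ne'
  -- Step A: the full Fourier sum
  have key : ∀ k ∈ range n,
      (∑ l ∈ range n, ((k:K) * l) * (if n ∣ k + l then (n:K) else 0))
        = (k:K) * ((n:K) - (k:K)) * n := by
    intro k hk
    rw [Finset.mem_range] at hk
    rcases Nat.eq_zero_or_pos k with rfl | hkpos
    · simp
    · rw [Finset.sum_eq_single (n - k)]
      · rw [if_pos ⟨1, by omega⟩]
        push_cast [Nat.cast_sub hk.le]
        ring
      · intro l hl hne
        rw [Finset.mem_range] at hl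
        rw [if_neg, mul_zero]
        rintro ⟨c, hc⟩
        rcases c with _ | _ | c
        · omega
        · omega
        · have : k + l ≥ 2 * n := by
            calc k + l = n * (c + 2) := hc
            _ ≥ 2 * n := by nlinarith
          omega
      · intro h
        exact absurd (Finset.mem_range.2 (by omega)) h
  have hF : ∑ j ∈ range n, (G j)^2 = (n:K) * ((n:K) * A - B) := by
    calc ∑ j ∈ range n, (G j)^2
        = ∑ j ∈ range n, ∑ k ∈ range n, ∑ l ∈ range n, ((k:K)*l) * (ζ^(k+l))^j := by
          refine Finset.sum_congr rfl fun j _ => ?_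
          rw [hG, sq, Finset.sum_mul_sum]
          refine Finset.sum_congr rfl fun k _ => Finset.sum_congr rfl fun l _ => ?_
          rw [← aux_pow_comm j k l]
          ring
      _ = ∑ k ∈ range n, ∑ l ∈ range n, ((k:K)*l) * (if n ∣ k + l then (n:K) else 0) := by
          rw [Finset.sum_comm]
          refine Finset.sum_congr rfl fun k _ => ?_
          rw [Finset.sum_comm]
          refine Finset.sum_congr rfl fun l _ => ?_
          rw [← Finset.mul_sum, aux_orth hζ]
      _ = ∑ k ∈ range n, (k:K) * ((n:K) - (k:K)) * n := Finset.sum_congr rfl key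
      _ = (n:K) * ((n:K) * A - B) := by
          rw [hA, hB, Finset.mul_sum, ← Finset.sum_sub_distrib, Finset.mul_sum]
          exact Finset.sum_congr rfl fun k _ => by ring
  -- Step B: split off j = 0
  have hRange : range n = insert 0 (Icc 1 (n-1)) := by
    ext x
    simp only [Finset.mem_range, Finset.mem_insert, Finset.mem_Icc]
    omega
  have h0 : 0 ∉ Icc 1 (n-1) := by simp
  have hG0 : G 0 = A := by simp [hG, hA]
  have hGj : ∀ j ∈ Icc 1 (n-1), (G j)^2 = (n:K)^2 * ((1 - ζ^j)⁻¹)^2 := by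
    intro j hj
    rw [Finset.mem_Icc] at hj
    have hw1 : ζ ^ j ≠ 1 := by
      intro h
      have hd := (hζ.pow_eq_one_iff_dvd j).1 h
      have := Nat.le_of_dvd (by omega) hd
      omega
    have hwn : (ζ ^ j) ^ n = 1 := by
      rw [← pow_mul, mul_comm, pow_mul, hζ.pow_eq_one, one_pow]
    have hgeom : ∑ k ∈ range n, (ζ^j)^k = 0 := by
      rw [geom_sum_eq hw1, hwn, sub_self, zero_div]
    have hkey : (1 - ζ^j) * G j = -(n:K) := by
      have htel := aux_telescope (ζ ^ j) n
      rw [hgeom, hwn] at htel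
      rw [hG]
      linear_combination htel
    have hnz : (1 - ζ^j) ≠ 0 := sub_ne_zero.2 (Ne.symm hw1)
    field_simp
    linear_combination ((1 - ζ^j) * G j - (n:K)) * hkey
  have e3 : (n:K) * ((n:K) * A - B) = A^2 + (n:K)^2 * S := by
    rw [← hF, hRange, Finset.sum_insert h0, hG0, hS, Finset.mul_sum]
    congr 1
    exact Finset.sum_congr rfl hGj
  have h1 : A * 2 = (n:K) * ((n:K) - 1) := aux_sum_id n
  have h2 : B * 6 = (n:K) * ((n:K) - 1) * (2*(n:K) - 1) := aux_sum_sq n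
  have goal' : (n:K)^2 * S = (n:K)^2 * (-(((n:K) - 1) * ((n:K) - 5)) / 12) := by
    linear_combination (-1 : K) * e3
      + ((n:K)^2 - A - (n:K)*((n:K)-1)/2) / 2 * h1
      + (-(n:K)/6) * h2
  exact mul_left_cancel₀ (pow_ne_zero 2 hn0) goal'

/-- Equation (1.8) (Shi–Pan): for a positive integer `n`,
`∑_{j=1}^{n-1} 1/(1-q^j)² ≡ -(n-1)(n-5)/12  (mod Φ_n(q))`. -/
theorem qharmonic_sq_mod_cyclotomic (n : ℕ) (hn : 0 < n) :
    ratModEq (Polynomial.cyclotomic n ℚ)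
      (∑ j ∈ Finset.Icc 1 (n - 1), 1 / (1 - q ^ j) ^ 2)
      (RatFunc.C (-(((n : ℚ) - 1) * ((n : ℚ) - 5)) / 12)) := by
  set c : ℚ := -(((n : ℚ) - 1) * ((n : ℚ) - 5)) / 12 with hc
  set φ := algebraMap (Polynomial ℚ) (RatFunc ℚ) with hφ
  set b : Polynomial ℚ := ∏ i ∈ Icc 1 (n-1), (1 - X^i)^2 with hb
  set anum : Polynomial ℚ :=
    (∑ j ∈ Icc 1 (n-1), ∏ i ∈ (Icc 1 (n-1)).erase j, (1 - X^i)^2) - C c * b with hanum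
  have hζ : IsPrimitiveRoot (Complex.exp (2 * Real.pi * Complex.I / n)) n :=
    Complex.isPrimitiveRoot_exp n hn.ne'
  set ζ := Complex.exp (2 * Real.pi * Complex.I / n)
  -- basic nonvanishing facts
  have hXi : ∀ i, 1 ≤ i → (1 : Polynomial ℚ) - X^i ≠ 0 := by
    intro i hi h
    have := congrArg (eval 0) h
    simp [zero_pow (by omega : i ≠ 0)] at this
  have hζi : ∀ i ∈ Icc 1 (n-1), (1 : ℂ) - ζ^i ≠ 0 := by
    intro i hi
    rw [Finset.mem_Icc] at hi
    refine sub_ne_zero.2 (fun h => ?_)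
    have hd := (hζ.pow_eq_one_iff_dvd i).1 h.symm
    have := Nat.le_of_dvd (by omega) hd
    omega
  have hb0 : b ≠ 0 := Finset.prod_ne_zero_iff.2 fun i hi =>
    pow_ne_zero 2 (hXi i (Finset.mem_Icc.1 hi).1)
  have hinj : Function.Injective φ := RatFunc.algebraMap_injective ℚ
  have hφb : φ b ≠ 0 := fun h => hb0 (hinj (by simpa using h))
  -- aeval of cyclotomic at ζ
  have hcycl : Polynomial.cyclotomic n ℚ = minpoly ℚ ζ := cyclotomic_eq_minpoly_rat hζ hn
  have haevalb : aeval ζ b = ∏ i ∈ Icc 1 (n-1), (1 - ζ^i)^2 := by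
    rw [hb, map_prod]
    exact Finset.prod_congr rfl fun i _ => by simp
  -- coprimality
  have hcop : IsCoprime b (Polynomial.cyclotomic n ℚ) := by
    refine ((Polynomial.cyclotomic.irreducible_rat hn).coprime_iff_not_dvd.2 ?_).symm
    intro hd
    have h0 : aeval ζ b = 0 := by
      obtain ⟨e, he⟩ := hd
      rw [he, map_mul, hcycl, minpoly.aeval, zero_mul]
    rw [haevalb] at h0
    exact (Finset.prod_ne_zero_iff.2 fun i hi => pow_ne_zero 2 (hζi i hi)) h0
  -- divisibility
  have hdvd : Polynomial.cyclotomic n ℚ ∣ anum := by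
    rw [hcycl]
    apply minpoly.dvd
    have hfi := field_identity hn hζ
    have hsum : ∀ j ∈ Icc 1 (n-1),
        (∏ i ∈ (Icc 1 (n-1)).erase j, (1 - ζ^i)^2)
          = ((1 - ζ^j)⁻¹)^2 * ∏ i ∈ Icc 1 (n-1), (1 - ζ^i)^2 := by
      intro j hj
      rw [← Finset.prod_erase_mul _ _ hj]
      field_simp
      rw [mul_div_cancel_right₀ _ (hζi j hj)]
    have hcC : (algebraMap ℚ ℂ) c = -(((n:ℂ) - 1) * ((n:ℂ) - 5)) / 12 := by
      rw [hc]
      push_cast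
      norm_num
    rw [hanum, map_sub, map_sum, map_mul, aeval_C, haevalb]
    have : ∀ j ∈ Icc 1 (n-1),
        aeval ζ (∏ i ∈ (Icc 1 (n-1)).erase j, ((1:Polynomial ℚ) - X^i)^2)
          = ∏ i ∈ (Icc 1 (n-1)).erase j, (1 - ζ^i)^2 := by
      intro j hj
      rw [map_prod]
      exact Finset.prod_congr rfl fun i _ => by simp
    rw [Finset.sum_congr rfl this, Finset.sum_congr rfl hsum, ← Finset.sum_mul, hfi, hcC,
      sub_self]
  -- the fraction equation
  have hterm : ∀ j ∈ Icc 1 (n-1),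
      φ (∏ i ∈ (Icc 1 (n-1)).erase j, (1 - X^i)^2) / φ b = 1 / (1 - q^j)^2 := by
    intro j hj
    have hbsplit : φ b = φ (∏ i ∈ (Icc 1 (n-1)).erase j, (1 - X^i)^2) * (1 - q^j)^2 := by
      rw [hb, ← Finset.prod_erase_mul _ _ hj, map_mul]
      congr 1
      rw [map_pow, map_sub, map_one, map_pow]
      simp [hφ, RatFunc.algebraMap_X, q]
    have he0 : φ (∏ i ∈ (Icc 1 (n-1)).erase j, (1 - X^i)^2) ≠ 0 := fun h => by
      have : (∏ i ∈ (Icc 1 (n-1)).erase j, ((1:Polynomial ℚ) - X^i)^2) = 0 := hinj (by simpa using h)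
      exact (Finset.prod_ne_zero_iff.2 fun i hi =>
        pow_ne_zero 2 (hXi i (Finset.mem_Icc.1 (Finset.mem_of_mem_erase hi)).1)) this
    have hq0 : (1 - q^j)^2 ≠ 0 := by
      rw [hbsplit] at hφb
      exact fun h => hφb (by rw [h, mul_zero])
    rw [hbsplit, div_mul_cancel_left₀ he0, one_div]
  refine ⟨anum, b, hcop, hdvd, ?_⟩
  rw [hanum, map_sub, map_mul, sub_div, mul_div_assoc, div_self hφb, mul_one, map_sum,
    Finset.sum_div, Finset.sum_congr rfl hterm]
  congr 1
end
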